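/- arXiv:2511.17082 — 7 statements merged into one kernel-verified Lean document; each statement's English description precedes it below -/
import Mathlib

section
/- For every d-dimensional latin hypercube Q of order n and every k with 0 ≤ k ≤ d, the number of k-dimensional cuboctahedra in Q is at most (d choose k) · n^(2d−1) · (n−1)^k. -/
/-- A `d`-dimensional latin hypercube of order `n`: in each line (each coordinate varies,
the others are fixed) all symbols are distinct. -/
def IsLatinHypercube {d n : ℕ} (Q : (Fin d → Fin n) → Fin n) : Prop :=
  ∀ (i : Fin d) (x : Fin d → Fin n),
    Function.Bijective (fun v : Fin n => Q (Function.update x i v))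

/-- `(A, B)` is a cuboctahedron of the hypercube `Q`: the two (possibly degenerate)
subcubes of order 2 determined by the pairs `A i` and `B i` carry the same symbols. -/
def IsCuboct {d n : ℕ} (Q : (Fin d → Fin n) → Fin n)
    (A B : Fin d → Fin n × Fin n) : Prop :=
  ∀ j : Fin d → Fin 2,
    Q (fun i => if j i = 0 then (A i).1 else (A i).2) =
    Q (fun i => if j i = 0 then (B i).1 else (B i).2)

/-- A cuboctahedron `(A, B)` is `k`-dimensional if the coordinates where `A` (resp. `B`)
has two distinct values coincide and there are exactly `k` of them. -/
def IsKDimCuboct {d n : ℕ} (k : ℕ) (A B : Fin d → Fin n × Fin n) : Prop :=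
  {i | (A i).1 ≠ (A i).2} = {i | (B i).1 ≠ (B i).2} ∧
  {i | (A i).1 ≠ (A i).2}.ncard = k

/-- The number of `k`-dimensional cuboctahedra of the hypercube `Q`. -/
noncomputable def kCuboctCount {d n : ℕ} (Q : (Fin d → Fin n) → Fin n) (k : ℕ) : ℕ :=
  Set.ncard {p : (Fin d → Fin n × Fin n) × (Fin d → Fin n × Fin n) |
    IsCuboct Q p.1 p.2 ∧ IsKDimCuboct k p.1 p.2}


/-! Sending a cuboctahedron `(A, B)` to `A` together with the base vertex `(B ·).1` of `B` is
injective: the vertex of `B` that differs from the base vertex only in coordinate `i` carries the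
same symbol as the corresponding vertex of `A`, so the latin property in coordinate `i` recovers
`(B i).2`. The base vertex of `B` carries the symbol of the base vertex of `A`, which leaves at most
`n ^ (d - 1)` choices for it, while `A` ranges over the `(d choose k) * n ^ d * (n - 1) ^ k`
families of pairs with exactly `k` non-degenerate coordinates. -/

open Finset Function

section Counting

variable {ι α : Type*} [Fintype ι] [DecidableEq ι] [Fintype α] [DecidableEq α]

def offDiagCoords (A : ι → α × α) : Finset ι := {i | (A i).1 ≠ (A i).2}

theorem card_filter_offDiagCoords_eq (S : Finset ι) :
    #{A : ι → α × α | offDiagCoords A = S} =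
      Fintype.card α ^ Fintype.card ι * (Fintype.card α - 1) ^ #S := by
  have hpi : ({A : ι → α × α | offDiagCoords A = S} : Finset _) =
      Fintype.piFinset fun i => if i ∈ S then (univ : Finset α).offDiag else univ.diag := by
    ext A
    simp only [mem_filter, mem_univ, true_and, Fintype.mem_piFinset, offDiagCoords,
      Finset.ext_iff]
    refine forall_congr' fun i => ?_
    split_ifs with hi <;> simp [hi]
  rw [hpi, Fintype.card_piFinset]
  simp only [apply_ite card, prod_ite, prod_const, offDiag_card, diag_card, card_univ,
    filter_mem_eq_inter, univ_inter, filter_not, card_univ_sdiff]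
  rw [← Nat.mul_sub_one, mul_pow, mul_right_comm, ← pow_add, Nat.add_sub_cancel' (card_le_univ S)]

theorem card_filter_card_offDiagCoords_eq (k : ℕ) :
    #{A : ι → α × α | #(offDiagCoords A) = k} =
      (Fintype.card ι).choose k * Fintype.card α ^ Fintype.card ι * (Fintype.card α - 1) ^ k := by
  have hmaps : ∀ A ∈ ({A : ι → α × α | #(offDiagCoords A) = k} : Finset _),
      offDiagCoords A ∈ powersetCard k univ :=
    fun _ hA => mem_powersetCard.2 ⟨subset_univ _, (mem_filter.1 hA).2⟩
  rw [card_eq_sum_card_fiberwise hmaps]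
  calc _ = ∑ _S ∈ powersetCard k (univ : Finset ι),
        Fintype.card α ^ Fintype.card ι * (Fintype.card α - 1) ^ k := by
        refine sum_congr rfl fun S hS => ?_
        rw [← (mem_powersetCard.1 hS).2, ← card_filter_offDiagCoords_eq S, filter_filter]
        exact congrArg card (filter_congr fun A _ => and_iff_right_of_imp (congrArg card))
    _ = _ := by rw [sum_const, card_powersetCard, card_univ, smul_eq_mul, mul_assoc]

end Counting

theorem card_fiber_le_of_injective_update {ι α β : Type*} [Fintype ι] [DecidableEq ι]
    [Fintype α] [DecidableEq β] {f : (ι → α) → β}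
    (hf : ∀ i x, Injective fun v => f (update x i v)) (c : β) :
    #{x | f x = c} ≤ Fintype.card α ^ (Fintype.card ι - 1) := by
  cases isEmpty_or_nonempty ι with
  | inl hι => simpa using card_le_univ ({x | f x = c} : Finset (ι → α))
  | inr hι =>
    obtain ⟨i⟩ := hι
    calc #{x | f x = c}
        ≤ #(univ : Finset ({j // j ≠ i} → α)) := by
          refine card_le_card_of_injOn (fun x j => x j) (fun _ _ => mem_univ _) ?_
          intro x hx y hy hxy
          have hy' : y = update x i (y i) := by
            funext j
            by_cases hj : j = i
            · subst hj; simp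
            · rw [update_of_ne hj]; exact (congrFun hxy ⟨j, hj⟩).symm
          have hxy' : x i = y i := hf i x <| by
            simp only [update_eq_self, ← hy']
            rw [(mem_filter.1 hx).2, (mem_filter.1 hy).2]
          rw [hy', ← hxy', update_eq_self]
      _ = Fintype.card α ^ (Fintype.card ι - 1) := by simp

section Hypercube

variable {d n : ℕ} {Q : (Fin d → Fin n) → Fin n}

instance (Q : (Fin d → Fin n) → Fin n) (A B : Fin d → Fin n × Fin n) :
    Decidable (IsCuboct Q A B) :=
  inferInstanceAs (Decidable (∀ _, _))

theorem IsKDimCuboct.card_offDiagCoords {k : ℕ} {A B : Fin d → Fin n × Fin n}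
    (h : IsKDimCuboct k A B) : #(offDiagCoords A) = k := by
  rw [← h.2, ← Set.ncard_coe_finset, offDiagCoords, coe_filter]
  simp

theorem IsLatinHypercube.card_fiber_le (hQ : IsLatinHypercube Q) (c : Fin n) :
    #{x | Q x = c} ≤ n ^ (d - 1) := by
  simpa using card_fiber_le_of_injective_update (fun i x => (hQ i x).injective) c

theorem IsCuboct.apply_fst_eq {A B : Fin d → Fin n × Fin n} (h : IsCuboct Q A B) :
    Q (fun i => (B i).1) = Q (fun i => (A i).1) := by
  simpa using (h 0).symm

theorem IsLatinHypercube.eq_of_isCuboct_of_fst_eq (hQ : IsLatinHypercube Q)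
    {A B B' : Fin d → Fin n × Fin n} (hB : IsCuboct Q A B) (hB' : IsCuboct Q A B')
    (hfst : ∀ i, (B i).1 = (B' i).1) : B = B' := by
  funext i
  have hvertex : ∀ C : Fin d → Fin n × Fin n,
      (fun l => if (Pi.single i 1 : Fin d → Fin 2) l = 0 then (C l).1 else (C l).2) =
        update (fun l => (C l).1) i (C i).2 := by
    intro C
    funext l
    by_cases hl : l = i
    · subst hl; simp
    · simp [hl]
  have h := (hB (Pi.single i 1)).symm.trans (hB' (Pi.single i 1))
  rw [hvertex, hvertex, show (fun l => (B l).1) = fun l => (B' l).1 from funext hfst] at h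
  exact Prod.ext (hfst i) ((hQ i _).injective h)

theorem IsLatinHypercube.card_isCuboct_le (hQ : IsLatinHypercube Q)
    (A : Fin d → Fin n × Fin n) : #{B | IsCuboct Q A B} ≤ n ^ (d - 1) :=
  (card_le_card_of_injOn (fun B i => (B i).1)
    (fun B hB => by simpa using (mem_filter.1 hB).2.apply_fst_eq)
    (fun B hB B' hB' h => hQ.eq_of_isCuboct_of_fst_eq (mem_filter.1 hB).2 (mem_filter.1 hB').2
      (congrFun h))).trans (hQ.card_fiber_le _)

theorem IsLatinHypercube.kCuboctCount_le_pow_mul_card (hQ : IsLatinHypercube Q) (k : ℕ) :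
    kCuboctCount Q k ≤ n ^ (d - 1) * #{A : Fin d → Fin n × Fin n | #(offDiagCoords A) = k} := by
  classical
  rw [kCuboctCount, Set.ncard_eq_toFinset_card', Set.toFinset_ofPred]
  refine card_le_mul_card_image_of_maps_to (f := Prod.fst)
    (fun p hp => mem_filter.2 ⟨mem_univ _, (mem_filter.1 hp).2.2.card_offDiagCoords⟩) _
    fun A _ => ?_
  refine le_trans ?_ (hQ.card_isCuboct_le A)
  refine card_le_card_of_injOn Prod.snd (fun p hp => ?_) fun p hp p' hp' h => ?_
  · obtain ⟨hcub, rfl⟩ := mem_filter.1 hp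
    exact mem_filter.2 ⟨mem_univ _, (mem_filter.1 hcub).2.1⟩
  · exact Prod.ext ((mem_filter.1 hp).2.trans (mem_filter.1 hp').2.symm) h

end Hypercube

theorem kCuboctCount_le_general {d n k : ℕ}
    (Q : (Fin d → Fin n) → Fin n) (hQ : IsLatinHypercube Q) :
    kCuboctCount Q k ≤ d.choose k * n ^ (2 * d - 1) * (n - 1) ^ k := by
  calc kCuboctCount Q k
      ≤ n ^ (d - 1) * #{A : Fin d → Fin n × Fin n | #(offDiagCoords A) = k} :=
        hQ.kCuboctCount_le_pow_mul_card k
    _ = d.choose k * n ^ (d + (d - 1)) * (n - 1) ^ k := by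
        rw [card_filter_card_offDiagCoords_eq, Fintype.card_fin, Fintype.card_fin, pow_add]
        ring
    _ = d.choose k * n ^ (2 * d - 1) * (n - 1) ^ k := by
        rw [show d + (d - 1) = 2 * d - 1 by omega]

/-- A `d`-dimensional latin hypercube of order `n` has at most
`(d choose k) * n ^ (2d - 1) * (n - 1) ^ k` `k`-dimensional cuboctahedra. -/
theorem kCuboctCount_le {d n k : ℕ} (hk : k ≤ d)
    (Q : (Fin d → Fin n) → Fin n) (hQ : IsLatinHypercube Q) :
    kCuboctCount Q k ≤ d.choose k * n ^ (2 * d - 1) * (n - 1) ^ k :=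
  kCuboctCount_le_general Q hQ
end

section
/- For every d-dimensional latin hypercube Q of order n with n ≥ 1, the number of 1-dimensional cuboctahedra in Q is exactly d · n^(2d−1) · (n−1). -/
namespace KCuboctAux
variable {d n : ℕ}
def ext (i₀ : Fin d) (v : Fin n) (a : {i : Fin d // i ≠ i₀} → Fin n) : Fin d → Fin n :=
  fun i => if h : i = i₀ then v else a ⟨i, h⟩
@[simp] lemma ext_self (i₀ : Fin d) (v : Fin n) (a) : ext i₀ v a i₀ = v := by simp [ext]
lemma ext_ne (i₀ : Fin d) (v : Fin n) (a) {i : Fin d} (h : i ≠ i₀) :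
    ext i₀ v a i = a ⟨i, h⟩ := by simp [ext, h]
lemma update_ext (i₀ : Fin d) (v w : Fin n) (a) :
    Function.update (ext i₀ v a) i₀ w = ext i₀ w a := by
  funext i
  rcases eq_or_ne i i₀ with h | h
  · subst h; simp
  · simp [Function.update, h, ext_ne _ _ _ h, ext, h]
def mk (i₀ : Fin d) (q : Fin n × Fin n) (a : {i : Fin d // i ≠ i₀} → Fin n) :
    Fin d → Fin n × Fin n :=
  fun i => if h : i = i₀ then q else (a ⟨i, h⟩, a ⟨i, h⟩)
@[simp] lemma mk_self (i₀ : Fin d) (q : Fin n × Fin n) (a) : mk i₀ q a i₀ = q := by simp [mk]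
lemma mk_ne (i₀ : Fin d) (q : Fin n × Fin n) (a) {i : Fin d} (h : i ≠ i₀) :
    mk i₀ q a i = (a ⟨i, h⟩, a ⟨i, h⟩) := by simp [mk, h]
lemma choice_mk (i₀ : Fin d) (q : Fin n × Fin n) (a) (j : Fin d → Fin 2) :
    (fun i => if j i = 0 then (mk i₀ q a i).1 else (mk i₀ q a i).2)
      = ext i₀ (if j i₀ = 0 then q.1 else q.2) a := by
  funext i
  rcases eq_or_ne i i₀ with h | h
  · subst h; rcases eq_or_ne (j i) 0 with hj | hj <;> simp [hj]
  · rcases eq_or_ne (j i) 0 with hj | hj <;> simp [hj, mk_ne _ _ _ h, ext_ne _ _ _ h]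
lemma mk_ne_set (i₀ : Fin d) (q : Fin n × Fin n) (a) (hq : q.1 ≠ q.2) :
    {i | (mk i₀ q a i).1 ≠ (mk i₀ q a i).2} = {i₀} := by
  ext i
  rcases eq_or_ne i i₀ with h | h
  · subst h; simp [hq]
  · simp [mk_ne _ _ _ h, h]
variable (Q : (Fin d → Fin n) → Fin n)
lemma bij_line (hn : 1 ≤ n) (hQ : IsLatinHypercube Q) (i₀ : Fin d)
    (b : {i : Fin d // i ≠ i₀} → Fin n) :
    Function.Bijective (fun v : Fin n => Q (ext i₀ v b)) := by
  have h := hQ i₀ (ext i₀ ⟨0, hn⟩ b)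
  have he : (fun v : Fin n => Q (Function.update (ext i₀ ⟨0, hn⟩ b) i₀ v))
      = fun v => Q (ext i₀ v b) := by
    funext v; rw [update_ext]
  rwa [he] at h
noncomputable def solv (hn : 1 ≤ n) (hQ : IsLatinHypercube Q) (i₀ : Fin d)
    (b : {i : Fin d // i ≠ i₀} → Fin n) (t : Fin n) : Fin n :=
  (Equiv.ofBijective _ (bij_line Q hn hQ i₀ b)).symm t
lemma solv_spec (hn : 1 ≤ n) (hQ : IsLatinHypercube Q) (i₀ : Fin d) (b) (t : Fin n) :
    Q (ext i₀ (solv Q hn hQ i₀ b t) b) = t :=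
  (Equiv.ofBijective _ (bij_line Q hn hQ i₀ b)).apply_symm_apply t
lemma solv_unique (hn : 1 ≤ n) (hQ : IsLatinHypercube Q) (i₀ : Fin d) (b) {t v : Fin n}
    (h : Q (ext i₀ v b) = t) : v = solv Q hn hQ i₀ b t := by
  apply (bij_line Q hn hQ i₀ b).injective
  simpa [solv_spec] using h
abbrev D (d n : ℕ) :=
  Σ i₀ : Fin d, ({i : Fin d // i ≠ i₀} → Fin n) × {q : Fin n × Fin n // q.1 ≠ q.2} ×
    ({i : Fin d // i ≠ i₀} → Fin n)
noncomputable def Phi (hn : 1 ≤ n) (hQ : IsLatinHypercube Q) (x : D d n) :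
    (Fin d → Fin n × Fin n) × (Fin d → Fin n × Fin n) :=
  (mk x.1 x.2.2.1.1 x.2.1,
   mk x.1 (solv Q hn hQ x.1 x.2.2.2 (Q (ext x.1 x.2.2.1.1.1 x.2.1)),
           solv Q hn hQ x.1 x.2.2.2 (Q (ext x.1 x.2.2.1.1.2 x.2.1))) x.2.2.2)

lemma mem_aux (hn : 1 ≤ n) (hQ : IsLatinHypercube Q) (i₀ : Fin d)
    (a b : {i : Fin d // i ≠ i₀} → Fin n) (q : Fin n × Fin n) (hq : q.1 ≠ q.2) :
    IsCuboct Q (mk i₀ q a)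
      (mk i₀ (solv Q hn hQ i₀ b (Q (ext i₀ q.1 a)),
              solv Q hn hQ i₀ b (Q (ext i₀ q.2 a))) b) ∧
    IsKDimCuboct 1 (mk i₀ q a)
      (mk i₀ (solv Q hn hQ i₀ b (Q (ext i₀ q.1 a)),
              solv Q hn hQ i₀ b (Q (ext i₀ q.2 a))) b) := by
  constructor
  · intro j
    rw [choice_mk, choice_mk]
    rcases eq_or_ne (j i₀) 0 with hj | hj <;> simp [hj, solv_spec]
  · have hs : solv Q hn hQ i₀ b (Q (ext i₀ q.1 a)) ≠ solv Q hn hQ i₀ b (Q (ext i₀ q.2 a)) := by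
      intro h
      apply hq
      have := congrArg (fun v => Q (ext i₀ v b)) h
      simp only [solv_spec] at this
      exact (bij_line Q hn hQ i₀ a).injective this
    constructor
    · rw [mk_ne_set _ _ _ hq, mk_ne_set _ _ _ hs]
    · rw [mk_ne_set _ _ _ hq, Set.ncard_singleton]

lemma Phi_mem (hn : 1 ≤ n) (hQ : IsLatinHypercube Q) (x : D d n) :
    IsCuboct Q (Phi Q hn hQ x).1 (Phi Q hn hQ x).2 ∧
      IsKDimCuboct 1 (Phi Q hn hQ x).1 (Phi Q hn hQ x).2 := by
  obtain ⟨i₀, a, ⟨q, hq⟩, b⟩ := x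
  exact mem_aux Q hn hQ i₀ a b q hq

lemma Phi_inj (hn : 1 ≤ n) (hQ : IsLatinHypercube Q) :
    Function.Injective (Phi Q hn hQ) := by
  rintro ⟨i₀, a, ⟨q, hq⟩, b⟩ ⟨i₁, a', ⟨q', hq'⟩, b'⟩ h
  have h1 : mk i₀ q a = mk i₁ q' a' := congrArg Prod.fst h
  have hi : i₀ = i₁ := by
    have := congrArg (fun A => {i | (A i).1 ≠ (A i).2}) h1
    simp only [mk_ne_set _ _ _ hq, mk_ne_set _ _ _ hq'] at this
    exact Set.singleton_eq_singleton_iff.mp this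
  subst hi
  have hqq : q = q' := by
    have := congrFun h1 i₀; simpa using this
  subst hqq
  have haa : a = a' := by
    funext i
    have := congrFun h1 i.1
    rw [mk_ne _ _ _ i.2, mk_ne _ _ _ i.2] at this
    simpa using congrArg Prod.fst this
  subst haa
  have h2 : mk i₀ (solv Q hn hQ i₀ b (Q (ext i₀ q.1 a)),
      solv Q hn hQ i₀ b (Q (ext i₀ q.2 a))) b
      = mk i₀ (solv Q hn hQ i₀ b' (Q (ext i₀ q.1 a)),
      solv Q hn hQ i₀ b' (Q (ext i₀ q.2 a))) b' := congrArg Prod.snd h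
  have hbb : b = b' := by
    funext i
    have := congrFun h2 i.1
    rw [mk_ne _ _ _ i.2, mk_ne _ _ _ i.2] at this
    simpa using congrArg Prod.fst this
  subst hbb
  rfl

lemma Phi_surj (hn : 1 ≤ n) (hQ : IsLatinHypercube Q)
    (A B : Fin d → Fin n × Fin n) (hc : IsCuboct Q A B) (hk : IsKDimCuboct 1 A B) :
    ∃ x : D d n, Phi Q hn hQ x = (A, B) := by
  obtain ⟨hset, hone⟩ := hk
  obtain ⟨i₀, hA⟩ := Set.ncard_eq_one.mp hone
  have hAi₀ : (A i₀).1 ≠ (A i₀).2 := by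
    have : i₀ ∈ {i | (A i).1 ≠ (A i).2} := by rw [hA]; exact rfl
    exact this
  have hAeq : ∀ i, i ≠ i₀ → (A i).1 = (A i).2 := by
    intro i hi
    by_contra hne
    have : i ∈ ({i₀} : Set (Fin d)) := hA ▸ hne
    exact hi this
  have hBeq : ∀ i, i ≠ i₀ → (B i).1 = (B i).2 := by
    intro i hi
    by_contra hne
    have : i ∈ ({i₀} : Set (Fin d)) := (hA ▸ hset) ▸ hne
    exact hi this
  set a : {i : Fin d // i ≠ i₀} → Fin n := fun i => (A i.1).1 with ha
  set b : {i : Fin d // i ≠ i₀} → Fin n := fun i => (B i.1).1 with hb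
  have extA : ∀ v : Fin 2, ext i₀ (if v = 0 then (A i₀).1 else (A i₀).2) a =
      fun i => if (fun _ : Fin d => v) i = 0 then (A i).1 else (A i).2 := by
    intro v; funext i
    rcases eq_or_ne i i₀ with h | h
    · subst h; simp
    · rw [ext_ne _ _ _ h]
      rcases eq_or_ne v 0 with hv | hv <;> simp [hv, ha, ← hAeq i h]
  have extB : ∀ v : Fin 2, ext i₀ (if v = 0 then (B i₀).1 else (B i₀).2) b =
      fun i => if (fun _ : Fin d => v) i = 0 then (B i).1 else (B i).2 := by
    intro v; funext i
    rcases eq_or_ne i i₀ with h | h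
    · subst h; simp
    · rw [ext_ne _ _ _ h]
      rcases eq_or_ne v 0 with hv | hv <;> simp [hv, hb, ← hBeq i h]
  have key : ∀ v : Fin 2, Q (ext i₀ (if v = 0 then (B i₀).1 else (B i₀).2) b)
      = Q (ext i₀ (if v = 0 then (A i₀).1 else (A i₀).2) a) := by
    intro v
    rw [extA v, extB v]
    exact (hc fun _ => v).symm
  have hs1 : (B i₀).1 = solv Q hn hQ i₀ b (Q (ext i₀ (A i₀).1 a)) := by
    apply solv_unique
    have := key 0; simpa using this
  have hs2 : (B i₀).2 = solv Q hn hQ i₀ b (Q (ext i₀ (A i₀).2 a)) := by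
    apply solv_unique
    have := key 1; simpa using this
  refine ⟨⟨i₀, a, ⟨A i₀, hAi₀⟩, b⟩, ?_⟩
  have hfst : mk i₀ (A i₀) a = A := by
    funext i
    rcases eq_or_ne i i₀ with h | h
    · subst h; simp
    · rw [mk_ne _ _ _ h]
      exact Prod.ext rfl (hAeq i h)
  have hsnd : mk i₀ (solv Q hn hQ i₀ b (Q (ext i₀ (A i₀).1 a)),
      solv Q hn hQ i₀ b (Q (ext i₀ (A i₀).2 a))) b = B := by
    funext i
    rcases eq_or_ne i i₀ with h | h
    · subst h; rw [mk_self, ← hs1, ← hs2]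
    · rw [mk_ne _ _ _ h]
      exact Prod.ext rfl (hBeq i h)
  exact Prod.ext hfst hsnd

lemma card_ne_sub (i₀ : Fin d) : Fintype.card {i : Fin d // i ≠ i₀} = d - 1 := by
  have := Fintype.card_subtype_compl (fun i : Fin d => i = i₀)
  simpa [Fintype.card_subtype_eq] using this

def neDiagEquiv : {q : Fin n × Fin n // q.1 ≠ q.2} ≃ Σ a : Fin n, {b : Fin n // b ≠ a} where
  toFun q := ⟨q.1.1, q.1.2, Ne.symm q.2⟩
  invFun x := ⟨(x.1, x.2.1), Ne.symm x.2.2⟩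
  left_inv q := rfl
  right_inv x := rfl

lemma card_pairs : Fintype.card {q : Fin n × Fin n // q.1 ≠ q.2} = n * (n - 1) := by
  rw [Fintype.card_congr neDiagEquiv, Fintype.card_sigma]
  have h : ∀ a : Fin n, Fintype.card {b : Fin n // b ≠ a} = n - 1 := by
    intro a
    have := Fintype.card_subtype_compl (fun b : Fin n => b = a)
    simpa [Fintype.card_subtype_eq] using this
  simp [h, Finset.sum_const, Finset.card_univ, mul_comm]

lemma card_D : Nat.card (D d n) = d * (n ^ (d - 1) * ((n * (n - 1)) * n ^ (d - 1))) := by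
  rw [Nat.card_eq_fintype_card, Fintype.card_sigma]
  have h : ∀ i₀ : Fin d,
      Fintype.card (({i : Fin d // i ≠ i₀} → Fin n) × {q : Fin n × Fin n // q.1 ≠ q.2} ×
        ({i : Fin d // i ≠ i₀} → Fin n))
      = n ^ (d - 1) * ((n * (n - 1)) * n ^ (d - 1)) := by
    intro i₀
    rw [Fintype.card_prod, Fintype.card_prod, Fintype.card_fun,
      card_ne_sub, card_pairs, Fintype.card_fin]
  simp [h, Finset.sum_const, Finset.card_univ]

end KCuboctAux

/-- The number of `1`-dimensional cuboctahedra in a `d`-dimensional latin hypercube of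
order `n ≥ 1` is exactly `d * n ^ (2d - 1) * (n - 1)`. -/
theorem kCuboctCount_one {d n : ℕ} (hn : 1 ≤ n)
    (Q : (Fin d → Fin n) → Fin n) (hQ : IsLatinHypercube Q) :
    kCuboctCount Q 1 = d * n ^ (2 * d - 1) * (n - 1) := by
  classical
  have hb : Function.Bijective (fun x : KCuboctAux.D d n =>
      (⟨KCuboctAux.Phi Q hn hQ x, KCuboctAux.Phi_mem Q hn hQ x⟩ :
        {p : (Fin d → Fin n × Fin n) × (Fin d → Fin n × Fin n) |
          IsCuboct Q p.1 p.2 ∧ IsKDimCuboct 1 p.1 p.2})) := by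
    constructor
    · intro x y hxy
      exact KCuboctAux.Phi_inj Q hn hQ (congrArg Subtype.val hxy)
    · rintro ⟨⟨A, B⟩, hc, hk⟩
      obtain ⟨x, hx⟩ := KCuboctAux.Phi_surj Q hn hQ A B hc hk
      exact ⟨x, Subtype.ext hx⟩
  unfold kCuboctCount
  rw [← Nat.card_coe_set_eq, ← Nat.card_eq_of_bijective _ hb, KCuboctAux.card_D]
  rcases Nat.eq_zero_or_pos d with hd | hd
  · subst hd; simp
  · have h1 : 2 * d - 1 = (d - 1) + (d - 1) + 1 := by omega
    rw [h1, pow_add, pow_add, pow_one]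
    ring
end

section
/- Every latin square L of order n contains at least 3n⁴ + n³ − 9n² + 6n cuboctahedra. -/
/-- A latin square of order `n`: all rows and all columns are bijections. -/
def IsLatinSquare {n : ℕ} (L : Fin n → Fin n → Fin n) : Prop :=
  (∀ r, Function.Bijective (fun c => L r c)) ∧
  (∀ c, Function.Bijective (fun r => L r c))


/-- The number of cuboctahedra of the latin square `L`: ordered pairs of quadruples
`((r₁, r₂, c₁, c₂), (r₁', r₂', c₁', c₂'))` such that `L r_a c_b = L r'_a c'_b`
for all `a, b ∈ {1, 2}`. -/
noncomputable def lsCuboctCount {n : ℕ} (L : Fin n → Fin n → Fin n) : ℕ :=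
  Set.ncard {p : (Fin n × Fin n × Fin n × Fin n) × (Fin n × Fin n × Fin n × Fin n) |
    match p with
    | ((r₁, r₂, c₁, c₂), (r₁', r₂', c₁', c₂')) =>
      L r₁ c₁ = L r₁' c₁' ∧ L r₁ c₂ = L r₁' c₂' ∧
      L r₂ c₁ = L r₂' c₁' ∧ L r₂ c₂ = L r₂' c₂'}

/-!
Write a quadruple `(r₁, r₂, c₁, c₂)` through `r₁` and the three symbols `y = (a, b, c)` it carries
at `(r₁, c₁)`, `(r₁, c₂)`, `(r₂, c₁)`; in a latin square this is a bijection. Two quadruples then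
form a cuboctahedron exactly when they have the same `y` and the same fourth symbol `d` at
`(r₂, c₂)`, so the count is `∑_y #{(s, t) | h_y s = h_y t}` with `h_y : r₁ ↦ d`.
If `a = b` (so `c₁ = c₂`) or `a = c` (so `r₁ = r₂`), `h_y` is constant and contributes `n²`.
Otherwise `h_y` never takes the values `b` and `c`, and since `m² ≥ 3m - 2` for every fibre size
`m`, it contributes at least `n + 2 #{b, c}`. Summing these bounds over all `y` gives exactly
`3n⁴ + n³ - 9n² + 6n`.
-/

open Finset

section CollisionCount

variable {α β : Type*} [Fintype α] [DecidableEq β]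

def collisionCount (f : α → β) : ℕ := #{p : α × α | f p.1 = f p.2}

lemma collisionCount_eq_sum_sq [Fintype β] (f : α → β) :
    collisionCount f = ∑ b, #{a | f a = b} ^ 2 := by
  rw [collisionCount, card_eq_sum_card_fiberwise (f := fun p : α × α => f p.1) (t := univ)
    fun _ _ => mem_univ _]
  refine sum_congr rfl fun b _ => ?_
  rw [sq, ← card_product]
  congr 1
  ext ⟨x, y⟩
  simp only [mem_filter, mem_univ, true_and, mem_product]
  grind

lemma collisionCount_comp_equiv {γ : Type*} [Fintype γ] (e : γ ≃ α) (f : α → β) :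
    collisionCount (f ∘ e) = collisionCount f :=
  card_equiv (e.prodCongr e) (by simp)

lemma collisionCount_comp_of_injective {γ : Type*} [DecidableEq γ] {g : β → γ}
    (hg : g.Injective) (f : α → β) : collisionCount (g ∘ f) = collisionCount f := by
  simp [collisionCount, hg.eq_iff]

lemma collisionCount_const (b : β) :
    collisionCount (fun _ : α => b) = Fintype.card α ^ 2 := by
  simp [collisionCount, sq]

lemma collisionCount_prod {ι : Type*} [Fintype ι] [DecidableEq ι] (h : ι → α → β) :
    collisionCount (fun p : ι × α => (p.1, h p.1 p.2)) = ∑ i, collisionCount (h i) := by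
  rw [collisionCount, card_eq_sum_card_fiberwise (f := fun q : (ι × α) × (ι × α) => q.1.1)
    (t := univ) fun _ _ => mem_univ _]
  refine sum_congr rfl fun i _ => ?_
  refine card_nbij' (fun q => (q.1.2, q.2.2)) (fun p => ((i, p.1), (i, p.2))) ?_ ?_ ?_ ?_
  all_goals
    intro q
    simp only [coe_filter, mem_filter, mem_univ, true_and, Set.mem_ofPred_eq, Prod.ext_iff]
    grind

lemma three_mul_card_add_le_collisionCount [Fintype β] {f : α → β} {S : Finset β}
    (hS : ∀ a, f a ∉ S) :
    3 * Fintype.card α + 2 * #S ≤ collisionCount f + 2 * Fintype.card β := by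
  have hα : Fintype.card α = ∑ b, #{a | f a = b} :=
    card_eq_sum_card_fiberwise fun _ _ => mem_univ _
  have hS' : #S = ∑ b, if b ∈ S then 1 else 0 := by simp
  rw [collisionCount_eq_sum_sq, hα, hS', ← card_univ, card_eq_sum_ones, mul_sum, mul_sum,
    mul_sum, ← sum_add_distrib, ← sum_add_distrib]
  refine sum_le_sum fun b _ => ?_
  split_ifs with hb
  · have : #{a | f a = b} = 0 :=
      card_eq_zero.2 (filter_eq_empty_iff.2 fun a _ h => hS a (h ▸ hb))
    simp [this]
  · -- `(m - 1) (m - 2) ≥ 0` for the fibre size `m`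
    rcases le_or_gt #{a | f a = b} 1 with h | h <;> nlinarith

end CollisionCount

def cuboctPattern {n : ℕ} (L : Fin n → Fin n → Fin n) (q : Fin n × Fin n × Fin n × Fin n) :
    Fin n × Fin n × Fin n × Fin n :=
  (L q.1 q.2.2.1, L q.1 q.2.2.2, L q.2.1 q.2.2.1, L q.2.1 q.2.2.2)

lemma lsCuboctCount_eq_collisionCount {n : ℕ} (L : Fin n → Fin n → Fin n) :
    lsCuboctCount L = collisionCount (cuboctPattern L) := by
  rw [collisionCount, ← Set.ncard_coe_finset, lsCuboctCount]
  congr 1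
  ext ⟨⟨r₁, r₂, c₁, c₂⟩, ⟨r₁', r₂', c₁', c₂'⟩⟩
  simp [cuboctPattern]

def cuboctTripleBound (n : ℕ) (y : Fin n × Fin n × Fin n) : ℕ :=
  if y.1 = y.2.1 ∨ y.1 = y.2.2 then n ^ 2 else n + 2 * #{y.2.1, y.2.2}

lemma sum_cuboctTripleBound_fst_snd (n : ℕ) (a b : Fin n) :
    ∑ c, (cuboctTripleBound n (a, b, c) : ℤ) =
      if a = b then (n : ℤ) ^ 3 else 2 * (n : ℤ) ^ 2 + 3 * n - 6 := by
  split_ifs with hab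
  · simp [cuboctTripleBound, hab]
    ring
  · have h : ∀ c, (cuboctTripleBound n (a, b, c) : ℤ) =
        n + 4 + (if a = c then (n : ℤ) ^ 2 - n - 4 else 0) - (if b = c then 2 else 0) := by
      intro c
      by_cases hac : a = c <;> by_cases hbc : b = c <;> simp_all [cuboctTripleBound]
      ring
    simp only [h, sum_sub_distrib, sum_add_distrib, sum_ite_eq, mem_univ, if_true, sum_const,
      card_univ, Fintype.card_fin, nsmul_eq_mul]
    ring

lemma sum_cuboctTripleBound (n : ℕ) :
    ∑ y, (cuboctTripleBound n y : ℤ) =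
      3 * (n : ℤ) ^ 4 + (n : ℤ) ^ 3 - 9 * (n : ℤ) ^ 2 + 6 * (n : ℤ) := by
  simp only [Fintype.sum_prod_type, sum_cuboctTripleBound_fst_snd]
  have h : ∀ a b : Fin n, (if a = b then (n : ℤ) ^ 3 else 2 * (n : ℤ) ^ 2 + 3 * n - 6) =
      2 * n ^ 2 + 3 * n - 6 + if a = b then (n : ℤ) ^ 3 - (2 * n ^ 2 + 3 * n - 6) else 0 := by
    intro a b
    split_ifs <;> ring
  simp only [h, sum_add_distrib, sum_ite_eq, mem_univ, if_true, sum_const,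
      card_univ, Fintype.card_fin, nsmul_eq_mul]
  ring

namespace IsLatinSquare

variable {n : ℕ} {L : Fin n → Fin n → Fin n}

lemma row_eq_iff (hL : IsLatinSquare L) {r c₁ c₂ : Fin n} : L r c₁ = L r c₂ ↔ c₁ = c₂ :=
  (hL.1 r).injective.eq_iff

lemma col_eq_iff (hL : IsLatinSquare L) {r₁ r₂ c : Fin n} : L r₁ c = L r₂ c ↔ r₁ = r₂ :=
  (hL.2 c).injective.eq_iff

noncomputable def rowEquiv (hL : IsLatinSquare L) (r : Fin n) : Fin n ≃ Fin n :=
  Equiv.ofBijective _ (hL.1 r)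

noncomputable def colEquiv (hL : IsLatinSquare L) (c : Fin n) : Fin n ≃ Fin n :=
  Equiv.ofBijective _ (hL.2 c)

lemma apply_rowEquiv_symm (hL : IsLatinSquare L) (r a : Fin n) :
    L r ((hL.rowEquiv r).symm a) = a :=
  (hL.rowEquiv r).apply_symm_apply a

lemma apply_colEquiv_symm (hL : IsLatinSquare L) (c a : Fin n) :
    L ((hL.colEquiv c).symm a) c = a :=
  (hL.colEquiv c).apply_symm_apply a

/-- A quadruple `(r₁, r₂, c₁, c₂)` is determined by `r₁` and the symbols `L r₁ c₁`, `L r₁ c₂`,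
`L r₂ c₁`: they locate `c₁` and `c₂` in row `r₁`, and then `r₂` in column `c₁`. -/
noncomputable def quadrupleEquiv (hL : IsLatinSquare L) :
    (Fin n × Fin n × Fin n × Fin n) ≃ (Fin n × Fin n × Fin n) × Fin n where
  toFun q := ((L q.1 q.2.2.1, L q.1 q.2.2.2, L q.2.1 q.2.2.1), q.1)
  invFun p :=
    let c₁ := (hL.rowEquiv p.2).symm p.1.1
    (p.2, (hL.colEquiv c₁).symm p.1.2.2, c₁, (hL.rowEquiv p.2).symm p.1.2.1)
  left_inv := by
    rintro ⟨r₁, r₂, c₁, c₂⟩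
    simp [rowEquiv, colEquiv]
  right_inv := by
    rintro ⟨⟨a, b, c⟩, s⟩
    simp [apply_rowEquiv_symm, apply_colEquiv_symm]

noncomputable def fourthSymbol (hL : IsLatinSquare L) (y : Fin n × Fin n × Fin n) (s : Fin n) :
    Fin n :=
  (cuboctPattern L (hL.quadrupleEquiv.symm (y, s))).2.2.2

lemma cuboctPattern_quadrupleEquiv_symm (hL : IsLatinSquare L) (y : Fin n × Fin n × Fin n)
    (s : Fin n) :
    cuboctPattern L (hL.quadrupleEquiv.symm (y, s)) =
      (y.1, y.2.1, y.2.2, hL.fourthSymbol y s) := by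
  set q := hL.quadrupleEquiv.symm (y, s)
  have h : ((L q.1 q.2.2.1, L q.1 q.2.2.2, L q.2.1 q.2.2.1), q.1) = (y, s) :=
    hL.quadrupleEquiv.apply_symm_apply (y, s)
  obtain ⟨⟨ha, hb, hc⟩, -⟩ := by simpa only [Prod.ext_iff] using h
  simp only [cuboctPattern, fourthSymbol, ha, hb, hc, q]

lemma fourthSymbol_eq_third_iff (hL : IsLatinSquare L) (a b c s : Fin n) :
    hL.fourthSymbol (a, b, c) s = c ↔ a = b := by
  obtain ⟨ha, hb, hc, hd⟩ := by
    simpa only [cuboctPattern, Prod.ext_iff] using hL.cuboctPattern_quadrupleEquiv_symm (a, b, c) s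
  generalize hL.quadrupleEquiv.symm ((a, b, c), s) = q at ha hb hc hd
  subst ha hb hc
  rw [← hd, hL.row_eq_iff, hL.row_eq_iff, eq_comm]

lemma fourthSymbol_eq_second_iff (hL : IsLatinSquare L) (a b c s : Fin n) :
    hL.fourthSymbol (a, b, c) s = b ↔ a = c := by
  obtain ⟨ha, hb, hc, hd⟩ := by
    simpa only [cuboctPattern, Prod.ext_iff] using hL.cuboctPattern_quadrupleEquiv_symm (a, b, c) s
  generalize hL.quadrupleEquiv.symm ((a, b, c), s) = q at ha hb hc hd
  subst ha hb hc
  rw [← hd, hL.col_eq_iff, hL.col_eq_iff, eq_comm]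

lemma collisionCount_cuboctPattern (hL : IsLatinSquare L) :
    collisionCount (cuboctPattern L) = ∑ y, collisionCount (hL.fourthSymbol y) := by
  have hreassoc : (fun p : (Fin n × Fin n × Fin n) × Fin n =>
      (p.1.1, p.1.2.1, p.1.2.2, p.2)).Injective := by
    rintro ⟨⟨a, b, c⟩, d⟩ ⟨⟨a', b', c'⟩, d'⟩ h
    simp_all
  calc collisionCount (cuboctPattern L)
      = collisionCount (cuboctPattern L ∘ hL.quadrupleEquiv.symm) :=
        (collisionCount_comp_equiv _ _).symm
    _ = collisionCount ((fun p : (Fin n × Fin n × Fin n) × Fin n =>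
          (p.1.1, p.1.2.1, p.1.2.2, p.2)) ∘
          fun p : (Fin n × Fin n × Fin n) × Fin n => (p.1, hL.fourthSymbol p.1 p.2)) := by
        congr 1
        funext ⟨y, s⟩
        exact hL.cuboctPattern_quadrupleEquiv_symm y s
    _ = ∑ y, collisionCount (hL.fourthSymbol y) := by
        rw [collisionCount_comp_of_injective hreassoc, collisionCount_prod]

lemma cuboctTripleBound_le_collisionCount (hL : IsLatinSquare L) (y : Fin n × Fin n × Fin n) :
    cuboctTripleBound n y ≤ collisionCount (hL.fourthSymbol y) := by
  obtain ⟨a, b, c⟩ := y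
  dsimp only [cuboctTripleBound]
  split_ifs with h
  · have hconst : ∃ d, hL.fourthSymbol (a, b, c) = fun _ => d := by
      rcases h with h | h
      · exact ⟨c, funext fun s => (hL.fourthSymbol_eq_third_iff a b c s).2 h⟩
      · exact ⟨b, funext fun s => (hL.fourthSymbol_eq_second_iff a b c s).2 h⟩
    obtain ⟨d, hd⟩ := hconst
    rw [hd, collisionCount_const, Fintype.card_fin]
  · have := three_mul_card_add_le_collisionCount (f := hL.fourthSymbol (a, b, c))
      (S := {b, c}) fun s => by
        simp_all [hL.fourthSymbol_eq_third_iff, hL.fourthSymbol_eq_second_iff]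
    simp only [Fintype.card_fin] at this
    omega

end IsLatinSquare

/-- Every latin square of order `n` contains at least `3n⁴ + n³ - 9n² + 6n`
cuboctahedra. -/
theorem lsCuboctCount_lower_bound {n : ℕ}
    (L : Fin n → Fin n → Fin n) (hL : IsLatinSquare L) :
    3 * (n : ℤ) ^ 4 + (n : ℤ) ^ 3 - 9 * (n : ℤ) ^ 2 + 6 * (n : ℤ) ≤
      (lsCuboctCount L : ℤ) := by
  calc 3 * (n : ℤ) ^ 4 + (n : ℤ) ^ 3 - 9 * (n : ℤ) ^ 2 + 6 * (n : ℤ)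
      = ∑ y, (cuboctTripleBound n y : ℤ) := (sum_cuboctTripleBound n).symm
    _ ≤ ∑ y, (collisionCount (hL.fourthSymbol y) : ℤ) :=
        sum_le_sum fun y _ => by exact_mod_cast hL.cuboctTripleBound_le_collisionCount y
    _ = lsCuboctCount L := by
        rw [lsCuboctCount_eq_collisionCount, hL.collisionCount_cuboctPattern]
        push_cast
        rfl
end

section
/- Let d ≥ 3, n > d, and 2 ≤ k ≤ d, and set r_k = ⌊ n^(d−1) / (n−1)^(2^k − k − 1) ⌋. Then every d-dimensional latin hypercube Q of order n contains at least (d choose k) · n · (n−d)^(2^k − 1) · r_k · (r_k − 1) non-degenerate k-dimensional cuboctahedra. -/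
/-- The number of non-degenerate `k`-dimensional cuboctahedra of the hypercube `Q`:
a cuboctahedron `(A, B)` is degenerate if `A = B`, and non-degenerate otherwise. -/
noncomputable def nondegenKCuboctCount {d n : ℕ}
    (Q : (Fin d → Fin n) → Fin n) (k : ℕ) : ℕ :=
  Set.ncard {p : (Fin d → Fin n × Fin n) × (Fin d → Fin n × Fin n) |
    IsCuboct Q p.1 p.2 ∧ IsKDimCuboct k p.1 p.2 ∧ p.1 ≠ p.2}

open Finset Function

/-- A colouring is determined by its colour at `root` together with, at every other vertex `j`,
its colour among the `card α - 1` colours different from that of `par j`. -/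
theorem card_le_of_ne_parent {β α : Type*} [Fintype β] [PartialOrder β] [WellFoundedLT β]
    [Fintype α] (root : β) (par : β → β) (hpar : ∀ j ≠ root, par j < j)
    (V : Finset (β → α)) (hV : ∀ P ∈ V, ∀ j ≠ root, P (par j) ≠ P j) :
    #V ≤ Fintype.card α * (Fintype.card α - 1) ^ (Fintype.card β - 1) := by
  classical
  let e (a : α) : {v // v ≠ a} ≃ Fin (Fintype.card α - 1) :=
    Fintype.equivFinOfCardEq (by rw [Fintype.card_subtype_compl, Fintype.card_subtype_eq])
  have e_cancel {a b : α} (x : {v // v ≠ a}) (y : {v // v ≠ b}) (hab : a = b)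
      (h : e a x = e b y) : x.1 = y.1 := by
    subst hab; rw [(e a).injective h]
  let E (P : V) : α × ({j // j ≠ root} → Fin (Fintype.card α - 1)) :=
    (P.1 root, fun j => e (P.1 (par j)) ⟨P.1 j, (hV P.1 P.2 j j.2).symm⟩)
  have hE : Injective E := by
    rintro ⟨P, hP⟩ ⟨P', hP'⟩ h
    simp only [E, Prod.mk.injEq, funext_iff] at h
    ext1; funext j
    induction j using WellFoundedLT.induction with
    | _ j ih =>
      by_cases hj : j = root
      · exact hj ▸ h.1
      · exact e_cancel _ _ (ih _ (hpar j hj)) (h.2 ⟨j, hj⟩)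
  simpa [Fintype.card_subtype_compl] using Fintype.card_le_of_injective E hE

theorem card_le_of_cube_colouring {ι α : Type*} [Fintype ι] [DecidableEq ι] [Fintype α]
    (V : Finset ((ι → Fin 2) → α))
    (hV : ∀ P ∈ V, ∀ j i, P (update j i 0) ≠ P (update j i 1)) :
    #V ≤ Fintype.card α * (Fintype.card α - 1) ^ (2 ^ Fintype.card ι - 1) := by
  have hsupp (j : ι → Fin 2) (hj : j ≠ 0) : ∃ i, j i ≠ 0 := Function.ne_iff.mp hj
  let par (j : ι → Fin 2) : ι → Fin 2 :=
    if hj : j ≠ 0 then update j (hsupp j hj).choose 0 else j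
  have hpar (j) (hj : j ≠ 0) : par j = update j (hsupp j hj).choose 0 := dif_pos hj
  have h := card_le_of_ne_parent 0 par (fun j hj => ?_) V (fun P hP j hj => ?_)
  · simpa using h
  · rw [hpar j hj, update_lt_self_iff]
    exact Fin.pos_iff_ne_zero.mpr (hsupp j hj).choose_spec
  · have hj1 : update j (hsupp j hj).choose 1 = j := by
      rw [update_eq_iff]
      exact ⟨(Fin.eq_one_of_ne_zero _ (hsupp j hj).choose_spec).symm, fun _ _ => rfl⟩
    rw [hpar j hj]
    conv_rhs => rw [← hj1]
    exact hV P hP _ _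

theorem mul_mul_sub_one_add_le_of_sq_le_mul {N r T S₂ : ℕ} (hCS : T ^ 2 ≤ N * S₂)
    (hr : N * r ≤ T) (hTS : T ≤ S₂) :
    N * (r * (r - 1)) + T ≤ S₂ := by
  rcases Nat.eq_zero_or_pos N with rfl | hN
  · simpa using hTS
  obtain _ | r := r
  · simpa using hTS
  refine Nat.le_of_mul_le_mul_left ?_ hN
  have : N * (r + 1) * (N * r) ≤ T * (T - N) :=
    Nat.mul_le_mul hr (by rw [Nat.mul_add] at hr; omega)
  calc N * (N * ((r + 1) * (r + 1 - 1)) + T) = N * (r + 1) * (N * r) + N * T := by simp; ring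
    _ ≤ T * (T - N) + N * T := by gcongr
    _ = T ^ 2 := by zify [show N ≤ T by nlinarith]; ring
    _ ≤ N * S₂ := hCS

theorem Finset.sum_sq_card_fiberwise {γ β : Type*} [DecidableEq β] (s : Finset γ)
    (f : γ → β) :
    ∑ b ∈ s.image f, #{a ∈ s | f a = b} ^ 2 = #{p ∈ s ×ˢ s | f p.1 = f p.2} := by
  rw [card_eq_sum_card_fiberwise (f := fun p => f p.1) (t := s.image f)
    (fun p hp => mem_image_of_mem _ (mem_product.mp (mem_filter.mp hp).1).1)]
  refine sum_congr rfl fun b _ => ?_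
  rw [sq, ← card_product, filter_filter]
  congr 1; ext ⟨a, a'⟩
  simp only [mem_product, mem_filter]
  constructor
  · rintro ⟨⟨ha, hb⟩, ha', hb'⟩; exact ⟨⟨ha, ha'⟩, hb.trans hb'.symm, hb⟩
  · rintro ⟨⟨ha, ha'⟩, hab, hb⟩; exact ⟨⟨ha, hb⟩, ha', hab ▸ hb⟩

theorem Finset.mul_le_card_offDiag_filter {γ β : Type*} [DecidableEq γ] [DecidableEq β]
    (s : Finset γ) (f : γ → β) {N r : ℕ} (hN : #(s.image f) ≤ N) (hr : N * r ≤ #s) :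
    N * (r * (r - 1)) ≤ #{p ∈ s.offDiag | f p.1 = f p.2} := by
  have hsum : ∑ b ∈ s.image f, #{a ∈ s | f a = b} = #s :=
    (card_eq_sum_card_fiberwise fun a ha => mem_image_of_mem f ha).symm
  have hsplit : #{p ∈ s ×ˢ s | f p.1 = f p.2} = #{p ∈ s.offDiag | f p.1 = f p.2} + #s := by
    rw [← diag_union_offDiag, filter_union, card_union_of_disjoint
      (disjoint_filter_filter (disjoint_diag_offDiag s)), add_comm,
      filter_true_of_mem fun p hp => congrArg f (mem_diag.mp hp).2, diag_card]
  have hCS : #s ^ 2 ≤ N * #{p ∈ s ×ˢ s | f p.1 = f p.2} := by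
    rw [← sum_sq_card_fiberwise, ← hsum]
    exact (sq_sum_le_card_mul_sum_sq).trans (Nat.mul_le_mul_right _ hN)
  have := mul_mul_sub_one_add_le_of_sq_le_mul hCS hr (by omega)
  omega

section Cuboct

variable {d n : ℕ}

def cubeVertex (A : Fin d → Fin n × Fin n) (j : Fin d → Fin 2) : Fin d → Fin n :=
  fun i => if j i = 0 then (A i).1 else (A i).2

def cubeColouring (Q : (Fin d → Fin n) → Fin n) (A : Fin d → Fin n × Fin n) :
    (Fin d → Fin 2) → Fin n :=
  fun j => Q (cubeVertex A j)

theorem isCuboct_iff_cubeColouring_eq {Q : (Fin d → Fin n) → Fin n}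
    {A B : Fin d → Fin n × Fin n} :
    IsCuboct Q A B ↔ cubeColouring Q A = cubeColouring Q B :=
  funext_iff.symm

theorem cubeVertex_update (A : Fin d → Fin n × Fin n) (j : Fin d → Fin 2) (i : Fin d)
    (b : Fin 2) :
    cubeVertex A (update j i b) =
      update (cubeVertex A j) i (if b = 0 then (A i).1 else (A i).2) := by
  ext1 i'
  rcases eq_or_ne i' i with rfl | hi
  · simp [cubeVertex]
  · simp [cubeVertex, hi]

theorem IsLatinHypercube.cubeColouring_update_ne {Q : (Fin d → Fin n) → Fin n}
    (hQ : IsLatinHypercube Q) {A : Fin d → Fin n × Fin n} {i : Fin d} (hA : (A i).1 ≠ (A i).2)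
    (j : Fin d → Fin 2) :
    cubeColouring Q A (update j i 0) ≠ cubeColouring Q A (update j i 1) := by
  simp only [cubeColouring, cubeVertex_update]
  exact fun h => hA ((hQ i _).injective h)

def subcubesWithSupport (S : Finset (Fin d)) : Finset (Fin d → Fin n × Fin n) :=
  Fintype.piFinset fun i => if i ∈ S then univ.offDiag else univ.diag

theorem mem_subcubesWithSupport {S : Finset (Fin d)} {A : Fin d → Fin n × Fin n} :
    A ∈ subcubesWithSupport S ↔ ∀ i, ((A i).1 ≠ (A i).2 ↔ i ∈ S) := by
  simp only [subcubesWithSupport, Fintype.mem_piFinset]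
  refine forall_congr' fun i => ?_
  split_ifs with hi <;> simp [hi]

theorem card_subcubesWithSupport (S : Finset (Fin d)) :
    #(subcubesWithSupport (n := n) S) = (n * n - n) ^ #S * n ^ (d - #S) := by
  simp only [subcubesWithSupport, Fintype.card_piFinset, apply_ite card, prod_ite, prod_const,
    offDiag_card, diag_card, card_univ, Fintype.card_fin, filter_mem_eq_inter, univ_inter,
    filter_not, card_univ_sdiff]

def extendByZero (S : Finset (Fin d)) (j : S → Fin 2) : Fin d → Fin 2 :=
  fun i => if h : i ∈ S then j ⟨i, h⟩ else 0

theorem extendByZero_update (S : Finset (Fin d)) (j : S → Fin 2) (i : S) (b : Fin 2) :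
    extendByZero S (update j i b) = update (extendByZero S j) i.1 b := by
  ext1 i'
  rcases eq_or_ne i' i with rfl | hi
  · simp [extendByZero]
  · by_cases h : i' ∈ S
    · have : (⟨i', h⟩ : S) ≠ i := fun e => hi (congrArg Subtype.val e)
      simp [extendByZero, hi, h, this]
    · simp [extendByZero, hi, h]

theorem disjoint_subcubesWithSupport {S S' : Finset (Fin d)} (h : S ≠ S') :
    Disjoint (subcubesWithSupport (n := n) S) (subcubesWithSupport S') := by
  refine disjoint_left.mpr fun A hA hA' => h ?_
  ext i
  rw [← mem_subcubesWithSupport.mp hA i, mem_subcubesWithSupport.mp hA' i]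

theorem isKDimCuboct_of_mem_subcubesWithSupport {S : Finset (Fin d)}
    {A B : Fin d → Fin n × Fin n} (hA : A ∈ subcubesWithSupport S)
    (hB : B ∈ subcubesWithSupport S) : IsKDimCuboct #S A B := by
  have hS {C : Fin d → Fin n × Fin n} (hC : C ∈ subcubesWithSupport S) :
      {i | (C i).1 ≠ (C i).2} = S := Set.ext (mem_subcubesWithSupport.mp hC)
  exact ⟨(hS hA).trans (hS hB).symm, by rw [hS hA, Set.ncard_coe_finset]⟩

theorem cubeVertex_extendByZero {S : Finset (Fin d)} {A : Fin d → Fin n × Fin n}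
    (hA : A ∈ subcubesWithSupport S) (j : Fin d → Fin 2) :
    cubeVertex A (extendByZero S fun i => j i) = cubeVertex A j := by
  ext1 i
  by_cases hi : i ∈ S
  · simp [cubeVertex, extendByZero, hi]
  · have hAi : (A i).1 = (A i).2 := not_not.mp ((mem_subcubesWithSupport.mp hA i).not.mpr hi)
    simp [cubeVertex, extendByZero, hi, hAi]

theorem cubeColouring_eq_iff_comp_extendByZero {Q : (Fin d → Fin n) → Fin n}
    {S : Finset (Fin d)} {A B : Fin d → Fin n × Fin n} (hA : A ∈ subcubesWithSupport S)
    (hB : B ∈ subcubesWithSupport S) :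
    cubeColouring Q A = cubeColouring Q B ↔
      cubeColouring Q A ∘ extendByZero S = cubeColouring Q B ∘ extendByZero S := by
  refine ⟨fun h => h ▸ rfl, fun h => funext fun j => ?_⟩
  simpa [cubeColouring, cubeVertex_extendByZero hA, cubeVertex_extendByZero hB] using
    congrFun h fun i => j i

theorem IsLatinHypercube.card_image_cubeColouring_le {Q : (Fin d → Fin n) → Fin n}
    (hQ : IsLatinHypercube Q) (S : Finset (Fin d)) :
    #((subcubesWithSupport S).image fun A => cubeColouring Q A ∘ extendByZero S) ≤
      n * (n - 1) ^ (2 ^ #S - 1) := by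
  refine (card_le_of_cube_colouring _ ?_).trans_eq (by simp)
  intro P hP j i
  obtain ⟨A, hA, rfl⟩ := mem_image.mp hP
  simp only [comp_apply, extendByZero_update]
  exact hQ.cubeColouring_update_ne ((mem_subcubesWithSupport.mp hA i).mpr i.2) _

theorem IsLatinHypercube.mul_le_card_cuboct_pairs {Q : (Fin d → Fin n) → Fin n}
    (hQ : IsLatinHypercube Q) (S : Finset (Fin d)) {r : ℕ}
    (hr : n * (n - 1) ^ (2 ^ #S - 1) * r ≤ #(subcubesWithSupport (n := n) S)) :
    n * (n - 1) ^ (2 ^ #S - 1) * (r * (r - 1)) ≤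
      #{p ∈ (subcubesWithSupport S).offDiag | cubeColouring Q p.1 = cubeColouring Q p.2} := by
  have := mul_le_card_offDiag_filter _ _ (hQ.card_image_cubeColouring_le S) hr
  convert this using 2
  exact filter_congr fun p hp =>
    cubeColouring_eq_iff_comp_extendByZero (mem_offDiag.mp hp).1 (mem_offDiag.mp hp).2.1

end Cuboct

theorem mul_sub_one_pow_mul_div_le {n d k : ℕ} (hd : 0 < d) (hkd : k ≤ d) :
    n * (n - 1) ^ (2 ^ k - 1) * (n ^ (d - 1) / (n - 1) ^ (2 ^ k - k - 1)) ≤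
      (n * n - n) ^ k * n ^ (d - k) := by
  have hexp : 2 ^ k - 1 = k + (2 ^ k - k - 1) := by have := k.lt_two_pow_self; omega
  calc _ = n * (n - 1) ^ k *
        ((n - 1) ^ (2 ^ k - k - 1) * (n ^ (d - 1) / (n - 1) ^ (2 ^ k - k - 1))) := by
        rw [hexp, pow_add]; ring
    _ ≤ n * (n - 1) ^ k * n ^ (d - 1) := by gcongr; exact Nat.mul_div_le _ _
    _ = (n - 1) ^ k * n ^ (d - 1 + 1) := by ring
    _ = (n * n - n) ^ k * n ^ (d - k) := by
        rw [show d - 1 + 1 = k + (d - k) by omega, ← Nat.mul_sub_one, pow_add, mul_pow]; ring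

theorem IsLatinHypercube.choose_mul_le_nondegenKCuboctCount {d n : ℕ}
    {Q : (Fin d → Fin n) → Fin n} (hQ : IsLatinHypercube Q) (hd : 0 < d) (k : ℕ) :
    d.choose k * (n * (n - 1) ^ (2 ^ k - 1) *
      (n ^ (d - 1) / (n - 1) ^ (2 ^ k - k - 1) *
        (n ^ (d - 1) / (n - 1) ^ (2 ^ k - k - 1) - 1))) ≤
      nondegenKCuboctCount Q k := by
  classical
  let pairs (S : Finset (Fin d)) :=
    {p ∈ (subcubesWithSupport S).offDiag | cubeColouring Q p.1 = cubeColouring Q p.2}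
  have hsub : ∀ S ∈ powersetCard k univ, ↑(pairs S) ⊆
      {p : (Fin d → Fin n × Fin n) × (Fin d → Fin n × Fin n) |
        IsCuboct Q p.1 p.2 ∧ IsKDimCuboct k p.1 p.2 ∧ p.1 ≠ p.2} := by
    intro S hS p hp
    obtain ⟨hoff, hcol⟩ := mem_filter.mp (mem_coe.mp hp)
    obtain ⟨hA, hB, hne⟩ := mem_offDiag.mp hoff
    refine ⟨isCuboct_iff_cubeColouring_eq.mpr hcol, ?_, hne⟩
    exact (mem_powersetCard.mp hS).2 ▸ isKDimCuboct_of_mem_subcubesWithSupport hA hB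
  have hdisj :
      (powersetCard k (univ : Finset (Fin d)) : Set (Finset (Fin d))).PairwiseDisjoint pairs :=
    fun S _ S' _ h => disjoint_left.mpr fun p hp hp' =>
      disjoint_left.mp (disjoint_subcubesWithSupport h) (mem_offDiag.mp (mem_filter.mp hp).1).1
        (mem_offDiag.mp (mem_filter.mp hp').1).1
  calc _ = ∑ S ∈ powersetCard k univ, n * (n - 1) ^ (2 ^ k - 1) *
        (n ^ (d - 1) / (n - 1) ^ (2 ^ k - k - 1) *
          (n ^ (d - 1) / (n - 1) ^ (2 ^ k - k - 1) - 1)) := by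
        simp
    _ ≤ ∑ S ∈ powersetCard k univ, #(pairs S) := sum_le_sum fun S hS => by
        obtain rfl := (mem_powersetCard.mp hS).2
        refine hQ.mul_le_card_cuboct_pairs S ?_
        rw [card_subcubesWithSupport]
        exact mul_sub_one_pow_mul_div_le hd (card_le_univ S |>.trans_eq (Fintype.card_fin d))
    _ = #((powersetCard k univ).biUnion pairs) := (card_biUnion hdisj).symm
    _ ≤ nondegenKCuboctCount Q k := by
        rw [← Set.ncard_coe_finset]
        exact Set.ncard_le_ncard (by simpa using hsub) (Set.toFinite _)

theorem nondegenKCuboctCount_lower_bound_general {d n k : ℕ}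
    (hd : 3 ≤ d)
    (Q : (Fin d → Fin n) → Fin n) (hQ : IsLatinHypercube Q) :
    d.choose k * n * (n - d) ^ (2 ^ k - 1) *
        (n ^ (d - 1) / (n - 1) ^ (2 ^ k - k - 1)) *
        (n ^ (d - 1) / (n - 1) ^ (2 ^ k - k - 1) - 1) ≤
      nondegenKCuboctCount Q k := by
  set r := n ^ (d - 1) / (n - 1) ^ (2 ^ k - k - 1)
  have hle : (n - d) ^ (2 ^ k - 1) ≤ (n - 1) ^ (2 ^ k - 1) := Nat.pow_le_pow_left (by omega) _
  calc d.choose k * n * (n - d) ^ (2 ^ k - 1) * r * (r - 1)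
      = d.choose k * (n * (n - d) ^ (2 ^ k - 1) * (r * (r - 1))) := by ring
    _ ≤ d.choose k * (n * (n - 1) ^ (2 ^ k - 1) * (r * (r - 1))) := by gcongr
    _ ≤ nondegenKCuboctCount Q k := hQ.choose_mul_le_nondegenKCuboctCount (by omega) k

/-- For `d ≥ 3`, `n > d` and `2 ≤ k ≤ d`, every `d`-dimensional latin hypercube of
order `n` contains at least `(d choose k) * n * (n - d) ^ (2^k - 1) * r_k * (r_k - 1)`
non-degenerate `k`-dimensional cuboctahedra, where
`r_k = ⌊n ^ (d - 1) / (n - 1) ^ (2^k - k - 1)⌋`. -/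
theorem nondegenKCuboctCount_lower_bound {d n k : ℕ}
    (hd : 3 ≤ d) (hn : d < n) (hk2 : 2 ≤ k) (hkd : k ≤ d)
    (Q : (Fin d → Fin n) → Fin n) (hQ : IsLatinHypercube Q) :
    d.choose k * n * (n - d) ^ (2 ^ k - 1) *
        (n ^ (d - 1) / (n - 1) ^ (2 ^ k - k - 1)) *
        (n ^ (d - 1) / (n - 1) ^ (2 ^ k - k - 1) - 1) ≤
      nondegenKCuboctCount Q k :=
  nondegenKCuboctCount_lower_bound_general hd Q hQ
end

section
/- Let d ≥ 3 and n > d, and for 2 ≤ k ≤ d set r_k = ⌊ n^(d−1) / (n−1)^(2^k − k − 1) ⌋. Then every d-dimensional latin hypercube Q of order n contains at least (d+1)·n^(2d) − (d−1)·(n^(2d−1) + n^d) − d·n^(d+1) + n·Σ_{k=2}^{d} (d choose k)·(n−d)^(2^k − 1)·r_k·(r_k − 1) cuboctahedra. -/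
/-- The number of cuboctahedra of the hypercube `Q` (ordered pairs `(A, B)`). -/
noncomputable def cuboctCount {d n : ℕ} (Q : (Fin d → Fin n) → Fin n) : ℕ :=
  Set.ncard {p : (Fin d → Fin n × Fin n) × (Fin d → Fin n × Fin n) |
    IsCuboct Q p.1 p.2}

/-!
Group the subcubes `A : Fin d → Fin n × Fin n` by their pattern `j ↦ Q (corner A j)`: the
cuboctahedra are the pairs with equal pattern, so their number is `∑ᵥ N(v)²`, and splitting each
fibre further by the set `T` of nondegenerate coordinates only decreases this sum of squares.
The class of `T`, with `k = #T`, has `M = nᵈ (n-1)ᵏ` members. In a latin hypercube two corners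
that differ in one coordinate of `T` carry different symbols, so a pattern is a proper colouring of
the cube `{0,1}ᵀ` and there are at most `P = n (n-1)^(2ᵏ-1)` of them. Cauchy–Schwarz gives
`∑ᵥ N_T(v)² ≥ M²/P`, which is `n^(2d-1) (n-1)ᵏ` for `k ≤ 1` and for `k ≥ 2` is at least
`M + n (n-d)^(2ᵏ-1) r_k (r_k - 1)` because `r_k ≤ M/P`. Summing over `T` with the binomial
theorem gives the claim with `2 (d-1) nᵈ` to spare.
-/

open Finset

section Fibres
variable {α β : Type*} [Fintype β] [DecidableEq β]

theorem card_filter_apply_eq_eq_sum_sq [Fintype α] (f : α → β) :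
    #{p : α × α | f p.1 = f p.2} = ∑ b, #{a | f a = b} ^ 2 := by
  rw [card_eq_sum_card_fiberwise fun p _ => mem_univ (f p.1)]
  refine sum_congr rfl fun b _ => ?_
  rw [sq, ← card_product, filter_filter]
  congr 1
  ext ⟨a, a'⟩
  simp only [mem_filter, mem_product, mem_univ, true_and]
  constructor
  · rintro ⟨h, rfl⟩; exact ⟨rfl, h.symm⟩
  · rintro ⟨rfl, h⟩; exact ⟨h.symm, rfl⟩

theorem card_le_sum_sq_card_filter (s : Finset α) (f : α → β) :
    #s ≤ ∑ b, #{a ∈ s | f a = b} ^ 2 := by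
  rw [card_eq_sum_card_fiberwise fun a _ => mem_univ (f a)]
  exact sum_le_sum fun b _ => Nat.le_self_pow two_ne_zero _

theorem sq_card_le_card_image_mul_sum_sq (s : Finset α) (f : α → β) :
    #s ^ 2 ≤ #(s.image f) * ∑ b, #{a ∈ s | f a = b} ^ 2 := by
  rw [card_eq_sum_card_image f s]
  exact sq_sum_le_card_mul_sum_sq.trans
    (Nat.mul_le_mul_left _ (sum_le_sum_of_subset (subset_univ _)))

end Fibres

theorem card_le_of_forall_exists_lt_ne {α : Type*} [Fintype α] [DecidableEq α] [Preorder α]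
    {m : ℕ} {s : Finset (α → Fin m)} {X : Finset α} {x₀ : α} (hx₀ : x₀ ∈ X)
    (hdet : ∀ v ∈ s, ∀ w ∈ s, Set.EqOn v w X → v = w)
    (hpar : ∀ x ∈ X, x ≠ x₀ → ∃ y ∈ X, y < x ∧ ∀ v ∈ s, v y ≠ v x) :
    #s ≤ m * (m - 1) ^ (#X - 1) := by
  rcases m with _ | m
  · simp [eq_empty_of_forall_notMem fun (v : α → Fin 0) _ => (v x₀).elim0]
  choose! par hparX hparlt hparne using hpar
  -- A colouring is encoded by its value at `x₀` and the nonzero differences `v x - v (par x)`;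
  -- it is decoded by well-founded induction along `par`.
  let code (v : α → Fin (m + 1)) : Fin (m + 1) × (α → Fin (m + 1)) :=
    (v x₀, fun x => if x ∈ X.erase x₀ then v x - v (par x) else 0)
  have hcard : #((univ : Finset (Fin (m + 1))) ×ˢ Fintype.piFinset fun x =>
      if x ∈ X.erase x₀ then univ.erase (0 : Fin (m + 1)) else {0}) =
      (m + 1) * m ^ (#X - 1) := by
    simp only [card_product, card_univ, Fintype.card_fin, Fintype.card_piFinset,
      apply_ite Finset.card, card_erase_of_mem (mem_univ _), card_singleton, prod_ite_mem,
      univ_inter, prod_const, card_erase_of_mem hx₀, add_tsub_cancel_right]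
  rw [add_tsub_cancel_right, ← hcard]
  refine card_le_card_of_injOn code (fun v hv => ?_) (fun v hv w hw hvw => ?_)
  · simp only [code, mem_coe, mem_product, mem_univ, true_and, Fintype.mem_piFinset]
    intro x
    split_ifs with hx
    · obtain ⟨hx, hxX⟩ := mem_erase.1 hx
      simpa [sub_eq_zero] using (hparne x hxX hx v hv).symm
    · exact mem_singleton_self 0
  · simp only [code, Prod.mk.injEq, funext_iff] at hvw
    refine hdet v hv w hw fun x => ?_
    induction x using WellFoundedLT.induction with
    | _ x ih =>
      intro hx
      by_cases hx₀x : x = x₀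
      · exact hx₀x ▸ hvw.1
      have hmem : x ∈ X.erase x₀ := mem_erase.2 ⟨hx₀x, hx⟩
      have := hvw.2 x
      rw [if_pos hmem, if_pos hmem, ih _ (hparlt x hx hx₀x) (hparX x hx hx₀x)] at this
      exact sub_left_injective this

theorem add_mul_mul_sub_one_le_of_sq_le {M P E r S : ℤ} (hP : 0 < P) (hE : E ≤ P) (hr : 0 ≤ r)
    (hPr : P * r ≤ M) (hMS : M ≤ S) (hsq : M ^ 2 ≤ P * S) : M + E * r * (r - 1) ≤ S := by
  rcases hr.eq_or_lt with rfl | hr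
  · simpa using hMS
  have hM : 0 ≤ M := le_trans (mul_nonneg hP.le hr.le) hPr
  refine le_of_mul_le_mul_left ?_ hP
  have hE' : E * (r * (r - 1)) ≤ P * (r * (r - 1)) :=
    mul_le_mul_of_nonneg_right hE (mul_nonneg hr.le (by linarith))
  calc P * (M + E * r * (r - 1)) ≤ P * M + (P * r) * (P * (r - 1)) := by
        nlinarith [mul_le_mul_of_nonneg_left hE' hP.le]
    _ ≤ P * M + M * (P * (r - 1)) := by
        gcongr; nlinarith
    _ = (P * r) * M := by ring
    _ ≤ M ^ 2 := by nlinarith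
    _ ≤ P * S := hsq

theorem sum_range_succ_eq_add_add_sum_Icc {M : Type*} [AddCommMonoid M] (f : ℕ → M) {d : ℕ}
    (hd : 1 ≤ d) : ∑ k ∈ range (d + 1), f k = f 0 + f 1 + ∑ k ∈ Icc 2 d, f k := by
  rw [← sum_range_add_sum_Ico f (by omega : 2 ≤ d + 1), Ico_add_one_right_eq_Icc]
  simp [sum_range_succ]

namespace Cuboct

variable {d n : ℕ}

def corner (A : Fin d → Fin n × Fin n) (j : Fin d → Fin 2) : Fin d → Fin n :=
  fun i => if j i = 0 then (A i).1 else (A i).2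

def pattern (Q : (Fin d → Fin n) → Fin n) (A : Fin d → Fin n × Fin n) :
    (Fin d → Fin 2) → Fin n :=
  fun j => Q (corner A j)

theorem isCuboct_iff_pattern_eq {Q : (Fin d → Fin n) → Fin n} {A B : Fin d → Fin n × Fin n} :
    IsCuboct Q A B ↔ pattern Q A = pattern Q B :=
  funext_iff.symm

def nondeg (A : Fin d → Fin n × Fin n) : Finset (Fin d) :=
  {i | (A i).1 ≠ (A i).2}

def subcubesOn (T : Finset (Fin d)) : Finset (Fin d → Fin n × Fin n) :=
  {A | nondeg A = T}

theorem subcubesOn_eq_piFinset (T : Finset (Fin d)) :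
    subcubesOn (n := n) T =
      Fintype.piFinset fun i => if i ∈ T then univ.offDiag else univ.diag := by
  ext A
  simp only [subcubesOn, nondeg, mem_filter, mem_univ, true_and, Fintype.mem_piFinset,
    Finset.ext_iff]
  refine forall_congr' fun i => ?_
  by_cases hi : i ∈ T <;> simp [hi]

theorem card_subcubesOn (T : Finset (Fin d)) :
    #(subcubesOn (n := n) T) = n ^ d * (n - 1) ^ #T := by
  have hsplit : ∀ i, #(if i ∈ T then (univ : Finset (Fin n)).offDiag else univ.diag) =
      n * if i ∈ T then n - 1 else 1 := by
    intro i
    split_ifs <;> simp [offDiag_card, Nat.mul_sub_one]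
  simp only [subcubesOn_eq_piFinset, Fintype.card_piFinset, hsplit, prod_mul_distrib,
    prod_const, card_univ, Fintype.card_fin, prod_ite_mem, univ_inter]

theorem pattern_eq_pattern_restrict {Q : (Fin d → Fin n) → Fin n} {T : Finset (Fin d)}
    {A : Fin d → Fin n × Fin n} (hA : A ∈ subcubesOn T) (j : Fin d → Fin 2) :
    pattern Q A j = pattern Q A fun i => if i ∈ T then j i else 0 := by
  simp only [subcubesOn, mem_filter, mem_univ, true_and] at hA
  refine congrArg Q (funext fun i => ?_)
  by_cases hi : i ∈ T
  · simp [corner, hi]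
  · have : (A i).1 = (A i).2 := by simpa [← hA, nondeg] using hi
    simp [corner, hi, this]

theorem corner_update (A : Fin d → Fin n × Fin n) (j : Fin d → Fin 2) (i : Fin d) (b : Fin 2) :
    corner A (Function.update j i b) =
      Function.update (corner A j) i (if b = 0 then (A i).1 else (A i).2) := by
  funext l
  by_cases hl : l = i
  · subst hl; simp [corner]
  · simp [corner, hl]

theorem pattern_update_zero_ne_update_one {Q : (Fin d → Fin n) → Fin n}
    (hQ : IsLatinHypercube Q) {A : Fin d → Fin n × Fin n} {i : Fin d} (hi : i ∈ nondeg A)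
    (j : Fin d → Fin 2) :
    pattern Q A (Function.update j i 0) ≠ pattern Q A (Function.update j i 1) := by
  simp only [nondeg, mem_filter, mem_univ, true_and] at hi
  simp only [pattern, corner_update, if_neg one_ne_zero]
  exact fun h => hi ((hQ i (corner A j)).injective h)

def selectionsOn (T : Finset (Fin d)) : Finset (Fin d → Fin 2) :=
  Fintype.piFinset fun i => if i ∈ T then univ else {0}

theorem card_selectionsOn (T : Finset (Fin d)) : #(selectionsOn T) = 2 ^ #T := by
  simp [selectionsOn, Fintype.card_piFinset, apply_ite Finset.card, prod_ite_mem]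

theorem mem_selectionsOn {T : Finset (Fin d)} {j : Fin d → Fin 2} :
    j ∈ selectionsOn T ↔ ∀ i ∉ T, j i = 0 := by
  simp only [selectionsOn, Fintype.mem_piFinset]
  refine forall_congr' fun i => ?_
  by_cases hi : i ∈ T <;> simp [hi]

theorem card_image_pattern_subcubesOn_le {Q : (Fin d → Fin n) → Fin n}
    (hQ : IsLatinHypercube Q) (T : Finset (Fin d)) :
    #((subcubesOn T).image (pattern Q)) ≤ n * (n - 1) ^ (2 ^ #T - 1) := by
  rw [← card_selectionsOn]
  refine card_le_of_forall_exists_lt_ne (mem_selectionsOn.2 fun _ _ => rfl) ?_ ?_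
  · simp only [mem_image]
    rintro _ ⟨A, hA, rfl⟩ _ ⟨B, hB, rfl⟩ hAB
    funext j
    rw [pattern_eq_pattern_restrict hA, pattern_eq_pattern_restrict hB]
    exact hAB (mem_selectionsOn.2 fun i hi => if_neg hi)
  · intro j hj hj0
    obtain ⟨i, hi⟩ := Function.ne_iff.1 hj0
    have hji : j i = 1 := Fin.eq_one_of_ne_zero _ hi
    have hiT : i ∈ T := by_contra fun hiT => hi (mem_selectionsOn.1 hj i hiT)
    refine ⟨Function.update j i 0, ?_, update_lt_self_iff.2 (Fin.pos_iff_ne_zero.2 hi), ?_⟩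
    · refine mem_selectionsOn.2 fun l hl => ?_
      rw [Function.update_of_ne (ne_of_mem_of_not_mem hiT hl).symm]
      exact mem_selectionsOn.1 hj l hl
    · simp only [mem_image]
      rintro _ ⟨A, hA, rfl⟩
      simp only [subcubesOn, mem_filter, mem_univ, true_and] at hA
      conv_rhs => rw [← Function.update_eq_self i j, hji]
      exact pattern_update_zero_ne_update_one hQ (hA ▸ hiT) j

def rk (d n k : ℕ) : ℕ := n ^ (d - 1) / (n - 1) ^ (2 ^ k - k - 1)

def classBound (d n k : ℕ) : ℤ :=
  if k ≤ 1 then (n : ℤ) ^ (2 * d - 1) * ((n : ℤ) - 1) ^ k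
  else (n : ℤ) ^ d * ((n : ℤ) - 1) ^ k +
    n * ((n : ℤ) - d) ^ (2 ^ k - 1) * (rk d n k : ℤ) * ((rk d n k : ℤ) - 1)

theorem classBound_le {k S : ℕ} (hd : 1 ≤ d) (hn : d < n)
    (hMS : n ^ d * (n - 1) ^ k ≤ S)
    (hsq : (n ^ d * (n - 1) ^ k) ^ 2 ≤ n * (n - 1) ^ (2 ^ k - 1) * S) :
    classBound d n k ≤ S := by
  have hn1 : 1 ≤ n := by omega
  have hn1' : (0 : ℤ) < (n : ℤ) - 1 := by omega
  have hP : (0 : ℤ) < n * ((n : ℤ) - 1) ^ (2 ^ k - 1) := by positivity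
  zify [hn1] at hMS hsq
  have hnd : (n : ℤ) ^ d = n * n ^ (d - 1) := (mul_pow_sub_one (by omega) _).symm
  unfold classBound
  split_ifs with hk
  · refine le_of_mul_le_mul_left (le_of_eq_of_le ?_ hsq) hP
    have h2d : (n : ℤ) ^ (2 * d - 1) = n ^ (d - 1) * n ^ d := by
      rw [← pow_add]; congr 1; omega
    rw [h2d, hnd]
    interval_cases k <;> norm_num <;> ring
  · refine add_mul_mul_sub_one_le_of_sq_le hP ?_ (Nat.cast_nonneg _) ?_ hMS hsq
    · gcongr <;> omega
    · have hr : rk d n k * (n - 1) ^ (2 ^ k - k - 1) ≤ n ^ (d - 1) := Nat.div_mul_le_self _ _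
      zify [hn1] at hr
      have hexp : ((n : ℤ) - 1) ^ (2 ^ k - 1) =
          ((n : ℤ) - 1) ^ (2 ^ k - k - 1) * ((n : ℤ) - 1) ^ k := by
        rw [← pow_add]; congr 1; have := Nat.lt_two_pow_self (n := k); omega
      rw [hexp, hnd]
      have : 0 ≤ (n : ℤ) * ((n : ℤ) - 1) ^ k := by positivity
      nlinarith

theorem sum_classBound_eq (hd : 1 ≤ d) :
    ∑ T : Finset (Fin d), classBound d n #T =
      ((d : ℤ) + 1) * (n : ℤ) ^ (2 * d) - ((d : ℤ) - 1) * (n : ℤ) ^ (2 * d - 1) -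
        (d : ℤ) * (n : ℤ) ^ (d + 1) + ((d : ℤ) - 1) * (n : ℤ) ^ d +
        (n : ℤ) * ∑ k ∈ Icc 2 d,
          (d.choose k : ℤ) * ((n : ℤ) - d) ^ (2 ^ k - 1) * (rk d n k : ℤ) *
            ((rk d n k : ℤ) - 1) := by
  have hbinom : ∑ k ∈ Icc 2 d, ((n : ℤ) - 1) ^ k * d.choose k =
      (n : ℤ) ^ d - 1 - d * ((n : ℤ) - 1) := by
    have h := add_pow ((n : ℤ) - 1) 1 d
    simp only [sub_add_cancel, one_pow, mul_one, sum_range_succ_eq_add_add_sum_Icc _ hd,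
      pow_zero, pow_one, Nat.choose_zero_right, Nat.choose_one_right, Nat.cast_one] at h
    linarith
  have hIcc : ∀ k ∈ Icc 2 d, (d.choose k : ℤ) * classBound d n k =
      (n : ℤ) ^ d * (((n : ℤ) - 1) ^ k * d.choose k) +
        n * ((d.choose k : ℤ) * ((n : ℤ) - d) ^ (2 ^ k - 1) * (rk d n k : ℤ) *
          ((rk d n k : ℤ) - 1)) := by
    intro k hk
    rw [classBound, if_neg (by simp at hk; omega)]
    ring
  rw [← powerset_univ, sum_powerset_apply_card, card_univ, Fintype.card_fin,
    sum_range_succ_eq_add_add_sum_Icc _ hd]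
  simp only [nsmul_eq_mul]
  rw [sum_congr rfl hIcc, sum_add_distrib, ← mul_sum, ← mul_sum, hbinom]
  simp only [classBound, zero_le_one, le_refl, if_true, pow_zero, pow_one, mul_one,
    Nat.choose_zero_right, Nat.choose_one_right, Nat.cast_one, one_mul]
  have h2d : (n : ℤ) ^ (2 * d - 1) = n ^ (d - 1) * n ^ d := by
    rw [← pow_add]; congr 1; omega
  have hnd : (n : ℤ) ^ d = n * n ^ (d - 1) := (mul_pow_sub_one (by omega) _).symm
  rw [h2d, two_mul, pow_add, pow_succ, hnd]
  ring

theorem cuboctCount_eq_sum_sq (Q : (Fin d → Fin n) → Fin n) :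
    cuboctCount Q = ∑ v, #{A | pattern Q A = v} ^ 2 := by
  rw [cuboctCount, ← card_filter_apply_eq_eq_sum_sq, ← Set.ncard_coe_finset]
  congr 1
  ext
  simp [isCuboct_iff_pattern_eq]

theorem card_filter_pattern_eq_eq_sum (Q : (Fin d → Fin n) → Fin n)
    (v : (Fin d → Fin 2) → Fin n) :
    #{A | pattern Q A = v} = ∑ T, #{A ∈ subcubesOn T | pattern Q A = v} := by
  rw [card_eq_sum_card_fiberwise fun A _ => mem_univ (nondeg A)]
  simp only [subcubesOn, filter_comm]

theorem classBound_card_le_sum_sq {Q : (Fin d → Fin n) → Fin n} (hd : 1 ≤ d) (hn : d < n)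
    (hQ : IsLatinHypercube Q) (T : Finset (Fin d)) :
    classBound d n #T ≤ ((∑ v, #{A ∈ subcubesOn T | pattern Q A = v} ^ 2 : ℕ) : ℤ) := by
  refine classBound_le hd hn ?_ ?_ <;> rw [← card_subcubesOn]
  · exact card_le_sum_sq_card_filter _ _
  · exact (sq_card_le_card_image_mul_sum_sq _ _).trans
      (Nat.mul_le_mul_right _ (card_image_pattern_subcubesOn_le hQ T))

theorem sum_classBound_le_cuboctCount {Q : (Fin d → Fin n) → Fin n} (hd : 1 ≤ d) (hn : d < n)
    (hQ : IsLatinHypercube Q) : ∑ T : Finset (Fin d), classBound d n #T ≤ cuboctCount Q := by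
  refine (sum_le_sum fun T _ => classBound_card_le_sum_sq hd hn hQ T).trans ?_
  rw [← Nat.cast_sum, cuboctCount_eq_sum_sq, sum_comm, Nat.cast_le]
  refine sum_le_sum fun v _ => ?_
  rw [card_filter_pattern_eq_eq_sum]
  exact sum_sq_le_sq_sum_of_nonneg fun _ _ => Nat.zero_le _

end Cuboct

/-- For `d ≥ 3` and `n > d`, every `d`-dimensional latin hypercube of order `n`
contains at least
`(d+1)·n^(2d) − (d−1)·(n^(2d−1) + n^d) − d·n^(d+1)
  + n·Σ_{k=2}^{d} (d choose k)·(n−d)^(2^k−1)·r_k·(r_k−1)`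
cuboctahedra, where `r_k = ⌊n ^ (d−1) / (n−1) ^ (2^k − k − 1)⌋`. -/
theorem cuboctCount_lower_bound {d n : ℕ} (hd : 3 ≤ d) (hn : d < n)
    (Q : (Fin d → Fin n) → Fin n) (hQ : IsLatinHypercube Q) :
    ((d : ℤ) + 1) * (n : ℤ) ^ (2 * d) -
        ((d : ℤ) - 1) * ((n : ℤ) ^ (2 * d - 1) + (n : ℤ) ^ d) -
        (d : ℤ) * (n : ℤ) ^ (d + 1) +
        (n : ℤ) * ∑ k ∈ Finset.Icc 2 d,
          (d.choose k : ℤ) * ((n : ℤ) - (d : ℤ)) ^ (2 ^ k - 1) *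
            ((n ^ (d - 1) / (n - 1) ^ (2 ^ k - k - 1) : ℕ) : ℤ) *
            (((n ^ (d - 1) / (n - 1) ^ (2 ^ k - k - 1) : ℕ) : ℤ) - 1) ≤
      (cuboctCount Q : ℤ) := by
  have hcount := Cuboct.sum_classBound_le_cuboctCount (by omega) hn hQ
  rw [Cuboct.sum_classBound_eq (by omega)] at hcount
  unfold Cuboct.rk at hcount
  have hslack : 0 ≤ ((d : ℤ) - 1) * (n : ℤ) ^ d := mul_nonneg (by omega) (by positivity)
  linarith
end

section
/- For every d ≥ 3 and every real ε > 0 there exists N such that for all n ≥ N, every d-dimensional latin hypercube Q of order n contains at least (d(d−1)/2 + d + 1 − ε) · n^(2d) cuboctahedra. -/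
open Finset

section SameValuePairs

variable {α β : Type*} [DecidableEq β]

lemma card_filter_product_eq_sum_sq (s : Finset α) (f : α → β) :
    #{p ∈ s ×ˢ s | f p.1 = f p.2} = ∑ b ∈ s.image f, #{a ∈ s | f a = b} ^ 2 := by
  rw [card_eq_sum_card_fiberwise (f := fun p => f p.1) (t := s.image f)
    fun p hp => mem_image_of_mem f (mem_product.1 (mem_filter.1 hp).1).1]
  refine sum_congr rfl fun b _ => ?_
  rw [sq, ← card_product]
  congr 1
  ext ⟨a, a'⟩
  simp only [mem_filter, mem_product]
  constructor
  · rintro ⟨⟨⟨ha, ha'⟩, hf⟩, rfl⟩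
    exact ⟨⟨ha, rfl⟩, ha', hf.symm⟩
  · rintro ⟨⟨ha, rfl⟩, ha', hf⟩
    exact ⟨⟨⟨ha, ha'⟩, hf.symm⟩, rfl⟩

lemma card_filter_product_eq_card_filter_offDiag_add [DecidableEq α] (s : Finset α)
    (f : α → β) :
    #{p ∈ s ×ˢ s | f p.1 = f p.2} = #{p ∈ s.offDiag | f p.1 = f p.2} + #s := by
  rw [← diag_union_offDiag, filter_union,
    card_union_of_disjoint (disjoint_filter_filter (disjoint_diag_offDiag s)),
    filter_true_of_mem fun p hp => congrArg f (mem_diag.1 hp).2, diag_card, add_comm]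

-- Cauchy–Schwarz over the fibres of `f`.
lemma sq_card_le_card_image_mul [DecidableEq α] (s : Finset α) (f : α → β) :
    #s ^ 2 ≤ #(s.image f) * (#{p ∈ s.offDiag | f p.1 = f p.2} + #s) := by
  rw [← card_filter_product_eq_card_filter_offDiag_add, card_filter_product_eq_sum_sq,
    card_eq_sum_card_image f s]
  exact sq_sum_le_card_mul_sum_sq

end SameValuePairs

lemma pow_mul_one_sub_le_of_sq_le {x F : ℝ} (hx : 1 ≤ x) {k d : ℕ} (hkd : k < d)
    (h : ((x - 1) ^ k * x ^ d) ^ 2 ≤ x ^ (2 * k) * (F + (x - 1) ^ k * x ^ d)) :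
    x ^ (2 * d) * (1 - (2 * k + 1) / x) ≤ F := by
  have hx0 : 0 < x := by linarith
  have hsmall : (x - 1) ^ k * x ^ d ≤ x ^ (2 * d) / x := by
    rw [le_div_iff₀ hx0]
    calc (x - 1) ^ k * x ^ d * x ≤ x ^ k * x ^ d * x := by
          gcongr
          linarith
      _ = x ^ (k + d + 1) := by ring
      _ ≤ x ^ (2 * d) := pow_le_pow_right₀ hx (by omega)
  have hbernoulli : 1 + (2 * k : ℕ) * (-1 / x) ≤ (1 + -1 / x) ^ (2 * k) :=
    one_add_mul_le_pow
      (by rw [neg_div, neg_le_neg_iff]; exact (div_le_one hx0).2 hx |>.trans one_le_two) _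
  have hsq : ((x - 1) ^ k * x ^ d) ^ 2
      = x ^ (2 * k) * (x ^ (2 * d) * (1 + -1 / x) ^ (2 * k)) := by
    rw [show 1 + -1 / x = (x - 1) / x by field_simp; ring, div_pow]
    field_simp
    ring
  have hmain : x ^ (2 * d) * (1 + (2 * k : ℕ) * (-1 / x)) ≤ F + (x - 1) ^ k * x ^ d := by
    refine le_of_mul_le_mul_left ?_ (pow_pos hx0 (2 * k))
    calc _ ≤ x ^ (2 * k) * (x ^ (2 * d) * (1 + -1 / x) ^ (2 * k)) := by gcongr
      _ ≤ _ := hsq ▸ h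
  have : x ^ (2 * d) * (1 - (2 * k + 1) / x)
      = x ^ (2 * d) * (1 + (2 * k : ℕ) * (-1 / x)) - x ^ (2 * d) / x := by
    push_cast; ring
  linarith

section Cubes

variable {d n : ℕ}

def cubeSymbols (Q : (Fin d → Fin n) → Fin n) (A : Fin d → Fin n × Fin n) :
    (Fin d → Fin 2) → Fin n :=
  fun j => Q fun i => if j i = 0 then (A i).1 else (A i).2

def cubeSupport (A : Fin d → Fin n × Fin n) : Finset (Fin d) := {i | (A i).1 ≠ (A i).2}

def cubesWithSupport (s : Finset (Fin d)) : Finset (Fin d → Fin n × Fin n) :=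
  {A | cubeSupport A = s}

def sameSymbolPairs (Q : (Fin d → Fin n) → Fin n) (C : Finset (Fin d → Fin n × Fin n)) :
    Finset ((Fin d → Fin n × Fin n) × (Fin d → Fin n × Fin n)) :=
  {p ∈ C.offDiag | cubeSymbols Q p.1 = cubeSymbols Q p.2}

lemma cuboctCount_eq (Q : (Fin d → Fin n) → Fin n) :
    cuboctCount Q = n ^ (2 * d) + #(sameSymbolPairs Q univ) := by
  have hcard : #(univ : Finset (Fin d → Fin n × Fin n)) = n ^ (2 * d) := by
    simp [pow_mul, sq]
  rw [sameSymbolPairs, ← hcard, add_comm, ← card_filter_product_eq_card_filter_offDiag_add,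
    univ_product_univ, cuboctCount, ← Set.ncard_coe_finset, coe_filter]
  simp only [mem_univ, true_and, IsCuboct, funext_iff, cubeSymbols]

lemma card_cubesWithSupport (s : Finset (Fin d)) :
    #(cubesWithSupport (n := n) s) = (n - 1) ^ #s * n ^ d := by
  have hpi : cubesWithSupport (n := n) s =
      Fintype.piFinset fun i => if i ∈ s then univ.offDiag else univ.diag := by
    ext A
    simp only [cubesWithSupport, cubeSupport, Finset.ext_iff, mem_filter, mem_univ, true_and,
      Fintype.mem_piFinset]
    refine forall_congr' fun i => ?_
    by_cases hi : i ∈ s <;> simp [hi, mem_offDiag, mem_diag]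
  have hfactor (i : Fin d) : #(if i ∈ s then (univ : Finset (Fin n)).offDiag else univ.diag)
      = (if i ∈ s then n - 1 else 1) * n := by
    split_ifs
    · rw [offDiag_card, card_univ, Fintype.card_fin, Nat.sub_one_mul]
    · rw [diag_card, card_univ, Fintype.card_fin, one_mul]
  simp only [hpi, Fintype.card_piFinset, hfactor, prod_mul_distrib, Fintype.prod_ite_mem,
    prod_const, card_univ, Fintype.card_fin]

lemma cubeSymbols_congr (Q : (Fin d → Fin n) → Fin n) {A : Fin d → Fin n × Fin n}
    {s : Finset (Fin d)} (hA : cubeSupport A ⊆ s) {j j' : Fin d → Fin 2}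
    (h : ∀ i ∈ s, j i = j' i) : cubeSymbols Q A j = cubeSymbols Q A j' := by
  unfold cubeSymbols
  congr 1
  funext i
  by_cases hi : i ∈ s
  · rw [h i hi]
  · have : (A i).1 = (A i).2 := by
      by_contra hne
      exact hi (hA (by simpa [cubeSupport] using hne))
    split_ifs <;> simp [this]

lemma card_image_cubeSymbols_le (Q : (Fin d → Fin n) → Fin n) (s : Finset (Fin d)) :
    #((cubesWithSupport s).image (cubeSymbols Q)) ≤ n ^ 2 ^ #s := by
  calc _ ≤ #(univ.image fun (g : (s → Fin 2) → Fin n) (j : Fin d → Fin 2) =>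
          g fun i => j i) := by
        refine card_le_card fun P hP => ?_
        obtain ⟨A, hA, rfl⟩ := mem_image.1 hP
        refine mem_image.2
          ⟨fun j => cubeSymbols Q A fun i => if h : i ∈ s then j ⟨i, h⟩ else 0, mem_univ _,
            funext fun j => ?_⟩
        exact cubeSymbols_congr Q (mem_filter.1 hA).2.le fun i hi => by simp [hi]
    _ ≤ n ^ 2 ^ #s := by
        refine card_image_le.trans ?_
        simp

lemma pow_mul_one_sub_le_card_sameSymbolPairs (Q : (Fin d → Fin n) → Fin n) (hn : 0 < n)
    {s : Finset (Fin d)} (hs : #s = 1 ∨ #s = 2) (hsd : #s < d) :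
    (n : ℝ) ^ (2 * d) * (1 - (2 * #s + 1) / n) ≤ #(sameSymbolPairs Q (cubesWithSupport s)) := by
  -- Only for `#s ≤ 2` is `2 ^ #s = 2 * #s`, so that the square of the `≈ n ^ (d + #s)` subcubes
  -- exceeds the number `n ^ 2 ^ #s` of patterns by the full factor `n ^ (2 * d)`.
  have h := (sq_card_le_card_image_mul (cubesWithSupport s) (cubeSymbols Q)).trans
    (Nat.mul_le_mul_right _ (card_image_cubeSymbols_le Q s))
  rw [card_cubesWithSupport, show 2 ^ #s = 2 * #s by rcases hs with hs | hs <;> simp [hs]] at h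
  refine pow_mul_one_sub_le_of_sq_le (by exact_mod_cast hn) hsd ?_
  have hR := (Nat.cast_le (α := ℝ)).2 h
  push_cast [Nat.cast_sub (Nat.one_le_of_lt hn)] at hR
  exact hR

lemma sum_card_sameSymbolPairs_le (Q : (Fin d → Fin n) → Fin n) :
    ∑ s, #(sameSymbolPairs Q (cubesWithSupport s)) ≤ #(sameSymbolPairs Q univ) := by
  rw [card_eq_sum_card_fiberwise (f := fun p => cubeSupport p.1) (t := univ)
    fun _ _ => mem_coe.2 (mem_univ _)]
  gcongr with s
  intro p hp
  simp only [sameSymbolPairs, cubesWithSupport, mem_filter, mem_offDiag, mem_univ, true_and]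
    at hp ⊢
  exact ⟨⟨hp.1.2.2, hp.2⟩, hp.1.1⟩

end Cubes

lemma le_cuboctCount {d n : ℕ} (Q : (Fin d → Fin n) → Fin n) (hd : 3 ≤ d) (hn : 0 < n) :
    ((d + d.choose 2 + 1 : ℝ) - 5 * (d + d.choose 2) / n) * (n : ℝ) ^ (2 * d) ≤
      cuboctCount Q := by
  set S : Finset (Finset (Fin d)) := univ.powersetCard 1 ∪ univ.powersetCard 2
  have hS : (#S : ℝ) = d + d.choose 2 := by
    rw [card_union_of_disjoint (pairwise_disjoint_powersetCard _ (by decide))]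
    simp
  have hterm : ∀ s ∈ S, (n : ℝ) ^ (2 * d) * (1 - 5 / n) ≤
      #(sameSymbolPairs Q (cubesWithSupport s)) := by
    intro s hs
    have hs' : #s = 1 ∨ #s = 2 := by simpa [S, mem_powersetCard] using hs
    refine le_trans ?_ (pow_mul_one_sub_le_card_sameSymbolPairs Q hn hs' (by omega))
    gcongr
    rcases hs' with h | h <;> rw [h] <;> norm_num
  calc _ = (n : ℝ) ^ (2 * d) + ∑ s ∈ S, (n : ℝ) ^ (2 * d) * (1 - 5 / n) := by
        rw [sum_const, nsmul_eq_mul, hS]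
        ring
    _ ≤ (n : ℝ) ^ (2 * d) + ∑ s ∈ S, (#(sameSymbolPairs Q (cubesWithSupport s)) : ℝ) := by
        gcongr with s hs
        exact hterm s hs
    _ ≤ (n : ℝ) ^ (2 * d) + ∑ s, (#(sameSymbolPairs Q (cubesWithSupport s)) : ℝ) := by
        gcongr
        exact subset_univ S
    _ ≤ cuboctCount Q := by
        rw [cuboctCount_eq]
        push_cast
        gcongr
        exact_mod_cast sum_card_sameSymbolPairs_le Q

/-- Asymptotically, every `d`-dimensional latin hypercube (`d ≥ 3`) of order `n`
contains at least `(d(d-1)/2 + d + 1 + o(1)) * n ^ (2d)` cuboctahedra as `n → ∞`. -/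
theorem cuboctCount_asymptotic_lower_bound (d : ℕ) (hd : 3 ≤ d)
    (ε : ℝ) (hε : 0 < ε) :
    ∃ N : ℕ, ∀ n : ℕ, N ≤ n →
      ∀ Q : (Fin d → Fin n) → Fin n, IsLatinHypercube Q →
        ((d : ℝ) * ((d : ℝ) - 1) / 2 + (d : ℝ) + 1 - ε) * (n : ℝ) ^ (2 * d) ≤
          (cuboctCount Q : ℝ) := by
  obtain ⟨N, hN⟩ := exists_nat_gt (5 * (d + d.choose 2) / ε)
  refine ⟨N, fun n hNn Q _ => ?_⟩
  have hn : 5 * (d + d.choose 2) / ε < n := hN.trans_le (by exact_mod_cast hNn)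
  have hnpos : (0 : ℝ) < n := (by positivity : (0 : ℝ) ≤ _).trans_lt hn
  have hsmall : 5 * (d + d.choose 2) / n ≤ ε := by
    rw [div_lt_iff₀ hε] at hn
    rw [div_le_iff₀ hnpos]
    linarith
  refine le_trans ?_ (le_cuboctCount Q hd (Nat.cast_pos.1 hnpos))
  rw [Nat.cast_choose_two] at hsmall ⊢
  apply mul_le_mul_of_nonneg_right _ (by positivity)
  linarith
end

section
/- If Q and Q' are isotopic d-dimensional latin hypercubes of order n, then Q and Q' have the same number of cuboctahedra; moreover, for each 0 ≤ k ≤ d, they have the same number of k-dimensional cuboctahedra. -/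
/-- Latin hypercubes `Q`, `Q'` are isotopic if `Q'` is obtained from `Q` by permuting
parallel hyperplanes (a permutation `σ i` in each coordinate `i`) and symbols (`τ`). -/
def HypercubeIsotopic {d n : ℕ} (Q Q' : (Fin d → Fin n) → Fin n) : Prop :=
  ∃ (σ : Fin d → Equiv.Perm (Fin n)) (τ : Equiv.Perm (Fin n)),
    ∀ x : Fin d → Fin n, Q' x = τ (Q (fun i => σ i (x i)))

/-- Isotopic latin hypercubes have the same number of cuboctahedra, and the same number
of `k`-dimensional cuboctahedra for each `0 ≤ k ≤ d`. -/
theorem cuboctCount_eq_of_isotopic {d n : ℕ}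
    (Q Q' : (Fin d → Fin n) → Fin n)
    (hQ : IsLatinHypercube Q) (hQ' : IsLatinHypercube Q')
    (h : HypercubeIsotopic Q Q') :
    cuboctCount Q = cuboctCount Q' ∧
    ∀ k : ℕ, k ≤ d → kCuboctCount Q k = kCuboctCount Q' k := by
  obtain ⟨σ, τ, hiso⟩ := h
  set F : (Fin d → Fin n × Fin n) → (Fin d → Fin n × Fin n) :=
    fun A i => (σ i (A i).1, σ i (A i).2) with hF
  have hFinj : Function.Injective F := by
    intro A B hAB
    funext i
    have := congrFun hAB i
    simp only [hF, Prod.mk.injEq] at this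
    exact Prod.ext ((σ i).injective this.1) ((σ i).injective this.2)
  have hFsurj : Function.Surjective F := by
    intro A
    exact ⟨fun i => ((σ i).symm (A i).1, (σ i).symm (A i).2), by
      funext i; simp [hF]⟩
  have key : ∀ A B, IsCuboct Q' A B ↔ IsCuboct Q (F A) (F B) := by
    intro A B
    unfold IsCuboct
    apply forall_congr'
    intro j
    have h1 : (fun i => if j i = 0 then (F A i).1 else (F A i).2) =
        fun i => σ i (if j i = 0 then (A i).1 else (A i).2) := by
      funext i; by_cases hji : j i = 0 <;> simp [hF, hji]
    have h2 : (fun i => if j i = 0 then (F B i).1 else (F B i).2) =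
        fun i => σ i (if j i = 0 then (B i).1 else (B i).2) := by
      funext i; by_cases hji : j i = 0 <;> simp [hF, hji]
    rw [h1, h2, hiso, hiso]
    exact ⟨fun hh => τ.injective hh, fun hh => congrArg τ hh⟩
  have keyset : ∀ A, {i | (F A i).1 ≠ (F A i).2} = {i | (A i).1 ≠ (A i).2} := by
    intro A
    ext i
    simp only [Set.mem_setOf_eq, hF, ne_eq]
    exact not_congr ⟨fun hh => (σ i).injective hh, fun hh => congrArg (σ i) hh⟩
  set E : ((Fin d → Fin n × Fin n) × (Fin d → Fin n × Fin n)) →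
      ((Fin d → Fin n × Fin n) × (Fin d → Fin n × Fin n)) :=
    fun p => (F p.1, F p.2) with hE
  have hEinj : Function.Injective E := by
    intro p q hpq
    simp only [hE, Prod.mk.injEq] at hpq
    exact Prod.ext (hFinj hpq.1) (hFinj hpq.2)
  constructor
  · unfold cuboctCount
    have himg : {p : (Fin d → Fin n × Fin n) × (Fin d → Fin n × Fin n) |
        IsCuboct Q p.1 p.2} =
        E '' {p | IsCuboct Q' p.1 p.2} := by
      ext p
      simp only [Set.mem_image, Set.mem_setOf_eq]
      constructor
      · intro hp
        obtain ⟨A, hA⟩ := hFsurj p.1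
        obtain ⟨B, hB⟩ := hFsurj p.2
        refine ⟨(A, B), ?_, ?_⟩
        · rw [key]; rw [hA, hB]; exact hp
        · simp [hE, hA, hB]
      · rintro ⟨q, hq, rfl⟩
        exact (key q.1 q.2).1 hq
    rw [himg, Set.ncard_image_of_injective _ hEinj]
  · intro k _
    unfold kCuboctCount
    have himg : {p : (Fin d → Fin n × Fin n) × (Fin d → Fin n × Fin n) |
        IsCuboct Q p.1 p.2 ∧ IsKDimCuboct k p.1 p.2} =
        E '' {p | IsCuboct Q' p.1 p.2 ∧ IsKDimCuboct k p.1 p.2} := by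
      ext p
      simp only [Set.mem_image, Set.mem_setOf_eq]
      constructor
      · intro hp
        obtain ⟨A, hA⟩ := hFsurj p.1
        obtain ⟨B, hB⟩ := hFsurj p.2
        refine ⟨(A, B), ⟨?_, ?_⟩, by simp [hE, hA, hB]⟩
        · rw [key, hA, hB]; exact hp.1
        · have := hp.2
          rw [← hA, ← hB] at this
          unfold IsKDimCuboct at this ⊢
          rwa [keyset, keyset] at this
      · rintro ⟨q, ⟨hq1, hq2⟩, rfl⟩
        refine ⟨(key q.1 q.2).1 hq1, ?_⟩
        unfold IsKDimCuboct at hq2 ⊢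
        simpa [hE, keyset] using hq2
    rw [himg, Set.ncard_image_of_injective _ hEinj]
end
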